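/- arXiv:0708.0990 — 6 statements merged into one kernel-verified Lean document; each statement's English description precedes it below -/
import Mathlib

section
/- If A is the magic matrix associated to a bouquet with tree (R, γ), then A = Σ_{T ∈ R} γ(T)·A(T). -/
/-!
Both sides have zero row sums, so it suffices to compare off-diagonal entries, i.e. to show
that for `i ≠ j` the sum of `γ T` over the rameaux `T` containing `i` and `j` is `m i j`.
By the ultrametric inequality, the closed ball `B = {k | m i k ≥ m i j}` is a rameau, and it is
the smallest rameau containing `i` and `j`; its diameter `α B` is `m i j`. The rameaux
containing `B` form the chain `B ⊂ maj B ⊂ maj (maj B) ⊂ ⋯ ⊂ T₀`, along which the sum of the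
`γ` telescopes to `α B`.
-/

open BigOperators Matrix

/-- The magic matrix of a bouquet with multiplicities `m`. -/
def bouquetMatrix {n : ℕ} (m : Fin n → Fin n → ℚ) : Matrix (Fin n) (Fin n) ℚ :=
  fun i j => if i = j then ∑ k ∈ Finset.univ.erase i, m i k else -(m i j)

/-- The elementary magic matrix `A(T)`. -/
def AT (n : ℕ) (T : Finset (Fin n)) : Matrix (Fin n) (Fin n) ℚ :=
  fun i j => if i ∈ T ∧ j ∈ T then (if i = j then (T.card : ℚ) - 1 else -1) else 0

open Finset

namespace Bouquet

section Valuation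

variable {G Γ ι : Type*} [AddGroup G] {ν : G → WithTop Γ} {a : ι → G} {m : ι → ι → Γ}

theorem symm_of_valuation (hνneg : ∀ x, ν (-x) = ν x)
    (hm : ∀ i j, i ≠ j → (m i j : WithTop Γ) = ν (a i - a j)) {i j : ι} (hij : i ≠ j) :
    m i j = m j i := by
  have h : (m i j : WithTop Γ) = m j i := by
    rw [hm i j hij, hm j i hij.symm, ← neg_sub, hνneg]
  exact_mod_cast h

theorem min_le_of_valuation [LinearOrder Γ] (hνadd : ∀ x y, min (ν x) (ν y) ≤ ν (x + y))
    (hm : ∀ i j, i ≠ j → (m i j : WithTop Γ) = ν (a i - a j)) {i j k : ι}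
    (hij : i ≠ j) (hjk : j ≠ k) (hik : i ≠ k) :
    min (m i j) (m j k) ≤ m i k := by
  have h : ((min (m i j) (m j k) : Γ) : WithTop Γ) ≤ m i k := by
    rw [WithTop.coe_min, hm i j hij, hm j k hjk, hm i k hik,
      ← sub_add_sub_cancel (a i) (a j) (a k)]
    exact hνadd _ _
  exact_mod_cast h

end Valuation

section Tree

variable {ι : Type*} [DecidableEq ι]

theorem filter_superset_eq_insert {R : Finset (Finset ι)} {T U : Finset ι} (hT : T ∈ R)
    (hTU : T ⊂ U) (hU : ∀ S ∈ R, T ⊂ S → U ⊆ S) :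
    R.filter (T ⊆ ·) = insert T (R.filter (U ⊆ ·)) := by
  ext S
  simp only [mem_filter, mem_insert]
  constructor
  · rintro ⟨hS, hTS⟩
    rcases eq_or_ne T S with rfl | hne
    · exact Or.inl rfl
    · exact Or.inr ⟨hS, hU S hS (ssubset_of_subset_of_ne hTS hne)⟩
  · rintro (rfl | ⟨hS, hUS⟩)
    · exact ⟨hT, subset_rfl⟩
    · exact ⟨hS, hTU.subset.trans hUS⟩

variable [Fintype ι] {M : Type*} [AddCommGroup M]

theorem sum_filter_superset_eq {R : Finset (Finset ι)} {maj : Finset ι → Finset ι}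
    (hmaj : ∀ T ∈ R, T ≠ univ → maj T ∈ R ∧ T ⊂ maj T ∧ ∀ S ∈ R, T ⊂ S → maj T ⊆ S)
    {α γ : Finset ι → M} (hγ : ∀ T ∈ R, γ T = if T = univ then α T else α T - α (maj T))
    {T : Finset ι} (hT : T ∈ R) :
    ∑ S ∈ R with T ⊆ S, γ S = α T := by
  by_cases hu : T = univ
  · subst hu
    have h : R.filter (univ ⊆ ·) = {univ} := by
      ext S
      simp only [mem_filter, mem_singleton, univ_subset_iff]
      exact ⟨And.right, fun h => ⟨h ▸ hT, h⟩⟩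
    rw [h, sum_singleton, hγ _ hT, if_pos rfl]
  · obtain ⟨hmajR, hlt, hmin⟩ := hmaj T hT hu
    have hnot : T ∉ R.filter (maj T ⊆ ·) := fun h => hlt.not_subset (mem_filter.1 h).2
    rw [filter_superset_eq_insert hT hlt hmin, sum_insert hnot,
      sum_filter_superset_eq hmaj hγ hmajR, hγ T hT, if_neg hu, sub_add_cancel]
termination_by Fintype.card ι - T.card
decreasing_by
  have := card_lt_card hlt
  have := card_le_univ (maj T)
  omega

end Tree

section Ultrametric

variable {ι Γ : Type*} [LinearOrder Γ] {m : ι → ι → Γ}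

theorem eq_of_lt (hsymm : ∀ i j, i ≠ j → m i j = m j i)
    (hultra : ∀ i j k, i ≠ j → j ≠ k → i ≠ k → min (m i j) (m j k) ≤ m i k)
    {i j k : ι} (hij : i ≠ j) (hjk : j ≠ k) (hik : i ≠ k) (hlt : m j k < m i j) :
    m i k = m j k := by
  have h₁ : m j k ≤ m i k := by simpa [hlt.le] using hultra i j k hij hjk hik
  have h₂ := hultra j i k hij.symm hik hjk
  rw [hsymm j i hij.symm, min_le_iff] at h₂
  exact le_antisymm (h₂.resolve_left hlt.not_ge) h₁

def IsRameau (m : ι → ι → Γ) (T : Finset ι) : Prop :=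
  2 ≤ T.card ∧ ∀ i ∈ T, ∀ j ∈ T, i ≠ j → ∀ k, k ∉ T → m i k = m j k ∧ m i k < m i j

variable [Fintype ι] [DecidableEq ι]

/-- Large values of `m` mean close points. The centre is put in by hand since `m i i` is
arbitrary. -/
def closedBall (m : ι → ι → Γ) (i : ι) (r : Γ) : Finset ι :=
  univ.filter fun k => k = i ∨ r ≤ m i k

theorem mem_closedBall {i k : ι} {r : Γ} : k ∈ closedBall m i r ↔ k = i ∨ r ≤ m i k := by
  simp [closedBall]

theorem le_of_mem_closedBall (hsymm : ∀ i j, i ≠ j → m i j = m j i)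
    (hultra : ∀ i j k, i ≠ j → j ≠ k → i ≠ k → min (m i j) (m j k) ≤ m i k)
    {i k l : ι} {r : Γ} (hk : k ∈ closedBall m i r) (hl : l ∈ closedBall m i r) (hkl : k ≠ l) :
    r ≤ m k l := by
  rw [mem_closedBall] at hk hl
  by_cases hki : k = i
  · subst hki
    exact hl.resolve_left hkl.symm
  by_cases hli : l = i
  · subst hli
    rw [← hsymm l k hkl.symm]
    exact hk.resolve_left hki
  calc r ≤ min (m k i) (m i l) := by
        rw [hsymm k i hki]
        exact le_min (hk.resolve_left hki) (hl.resolve_left hli)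
    _ ≤ m k l := hultra k i l hki (Ne.symm hli) hkl

theorem isRameau_closedBall (hsymm : ∀ i j, i ≠ j → m i j = m j i)
    (hultra : ∀ i j k, i ≠ j → j ≠ k → i ≠ k → min (m i j) (m j k) ≤ m i k)
    {i j : ι} (hij : i ≠ j) : IsRameau m (closedBall m i (m i j)) := by
  have hi : i ∈ closedBall m i (m i j) := mem_closedBall.2 (Or.inl rfl)
  have hj : j ∈ closedBall m i (m i j) := mem_closedBall.2 (Or.inr le_rfl)
  refine ⟨one_lt_card_iff.2 ⟨i, j, hi, hj, hij⟩, fun p hp q hq hpq k hk => ?_⟩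
  obtain ⟨hki, hkfar⟩ : k ≠ i ∧ m i k < m i j := by
    simpa [mem_closedBall, not_or] using hk
  have hfar : ∀ p ∈ closedBall m i (m i j), m p k = m i k := by
    intro p hp
    by_cases hpi : p = i
    · rw [hpi]
    have hpk : p ≠ k := fun h => hk (h ▸ hp)
    refine eq_of_lt hsymm hultra hpi (Ne.symm hki) hpk ?_
    rw [hsymm p i hpi]
    exact hkfar.trans_le ((mem_closedBall.1 hp).resolve_left hpi)
  refine ⟨(hfar p hp).trans (hfar q hq).symm, ?_⟩
  rw [hfar p hp]
  exact hkfar.trans_le (le_of_mem_closedBall hsymm hultra hp hq hpq)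

theorem closedBall_subset_of_isRameau {T : Finset ι} (hT : IsRameau m T) {i j : ι}
    (hi : i ∈ T) (hj : j ∈ T) (hij : i ≠ j) : closedBall m i (m i j) ⊆ T := by
  intro k hk
  by_contra hkT
  rcases mem_closedBall.1 hk with rfl | hnear
  · exact hkT hi
  · exact (hT.2 i hi j hj hij k hkT).2.not_ge hnear

theorem sum_filter_mem_mem_eq [AddCommGroup Γ] (hsymm : ∀ i j, i ≠ j → m i j = m j i)
    (hultra : ∀ i j k, i ≠ j → j ≠ k → i ≠ k → min (m i j) (m j k) ≤ m i k)
    {R : Finset (Finset ι)} (hR : ∀ T, T ∈ R ↔ IsRameau m T) {α : Finset ι → Γ}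
    (hαle : ∀ T ∈ R, ∀ i ∈ T, ∀ j ∈ T, i ≠ j → α T ≤ m i j)
    (hαeq : ∀ T ∈ R, ∃ i ∈ T, ∃ j ∈ T, i ≠ j ∧ α T = m i j)
    {maj : Finset ι → Finset ι}
    (hmaj : ∀ T ∈ R, T ≠ univ → maj T ∈ R ∧ T ⊂ maj T ∧ ∀ S ∈ R, T ⊂ S → maj T ⊆ S)
    {γ : Finset ι → Γ} (hγ : ∀ T ∈ R, γ T = if T = univ then α T else α T - α (maj T))
    {i j : ι} (hij : i ≠ j) :
    ∑ T ∈ R with i ∈ T ∧ j ∈ T, γ T = m i j := by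
  set B := closedBall m i (m i j)
  have hi : i ∈ B := mem_closedBall.2 (Or.inl rfl)
  have hj : j ∈ B := mem_closedBall.2 (Or.inr le_rfl)
  have hB : B ∈ R := (hR B).2 (isRameau_closedBall hsymm hultra hij)
  have hfilter : R.filter (fun T => i ∈ T ∧ j ∈ T) = R.filter (B ⊆ ·) := by
    ext T
    simp only [mem_filter, and_congr_right_iff]
    exact fun hT => ⟨fun ⟨hiT, hjT⟩ => closedBall_subset_of_isRameau ((hR T).1 hT) hiT hjT hij,
      fun hBT => ⟨hBT hi, hBT hj⟩⟩
  rw [hfilter, sum_filter_superset_eq hmaj hγ hB]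
  obtain ⟨k, hk, l, hl, hkl, hα⟩ := hαeq B hB
  exact le_antisymm (hαle B hB i hi j hj hij) (hα ▸ le_of_mem_closedBall hsymm hultra hk hl hkl)

end Ultrametric

end Bouquet

namespace Matrix

variable {ι α : Type*} [Fintype ι] [DecidableEq ι] [Ring α]

theorem apply_self_eq_neg_sum_erase {A : Matrix ι ι α} (hA : A *ᵥ 1 = 0) (i : ι) :
    A i i = -∑ k ∈ univ.erase i, A i k := by
  have h := congrFun hA i
  simp only [mulVec, dotProduct, Pi.one_apply, mul_one, Pi.zero_apply] at h
  rw [← add_sum_erase _ _ (mem_univ i)] at h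
  exact eq_neg_of_add_eq_zero_left h

theorem ext_of_mulVec_one_eq_zero {A B : Matrix ι ι α} (hA : A *ᵥ 1 = 0) (hB : B *ᵥ 1 = 0)
    (h : ∀ i j, i ≠ j → A i j = B i j) : A = B := by
  ext i j
  rcases eq_or_ne i j with rfl | hij
  · rw [apply_self_eq_neg_sum_erase hA, apply_self_eq_neg_sum_erase hB]
    exact congrArg _ (sum_congr rfl fun k hk => h i k (ne_of_mem_erase hk).symm)
  · exact h i j hij

end Matrix

section MagicMatrix

variable {n : ℕ}

theorem bouquetMatrix_mulVec_one (m : Fin n → Fin n → ℚ) : bouquetMatrix m *ᵥ 1 = 0 := by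
  ext i
  simp only [mulVec, dotProduct, Pi.one_apply, mul_one, Pi.zero_apply]
  rw [← add_sum_erase _ _ (mem_univ i)]
  simp only [bouquetMatrix, ↓reduceIte]
  rw [sum_congr rfl fun k hk => if_neg (ne_of_mem_erase hk).symm, sum_neg_distrib,
    add_neg_cancel]

theorem AT_mulVec_one (T : Finset (Fin n)) : AT n T *ᵥ 1 = 0 := by
  ext i
  simp only [mulVec, dotProduct, Pi.one_apply, mul_one, Pi.zero_apply]
  by_cases hi : i ∈ T
  · simp only [AT, hi, true_and]
    rw [← sum_filter, filter_mem_eq_inter, univ_inter, ← add_sum_erase _ _ hi, if_pos rfl,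
      sum_congr rfl fun k hk => if_neg (ne_of_mem_erase hk).symm, sum_const, card_erase_of_mem hi,
      nsmul_eq_mul, Nat.cast_pred (card_pos.2 ⟨i, hi⟩)]
    ring
  · simp [AT, hi]

theorem bouquetMatrix_eq_sum_smul_AT {m : Fin n → Fin n → ℚ} {R : Finset (Finset (Fin n))}
    {γ : Finset (Fin n) → ℚ} (h : ∀ i j, i ≠ j → ∑ T ∈ R with i ∈ T ∧ j ∈ T, γ T = m i j) :
    bouquetMatrix m = ∑ T ∈ R, γ T • AT n T := by
  refine Matrix.ext_of_mulVec_one_eq_zero (bouquetMatrix_mulVec_one m) ?_ fun i j hij => ?_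
  · simp [sum_mulVec, smul_mulVec, AT_mulVec_one]
  · rw [bouquetMatrix, if_neg hij, ← h i j hij, sum_filter, ← sum_neg_distrib, Matrix.sum_apply]
    refine sum_congr rfl fun T _ => ?_
    by_cases hT : i ∈ T ∧ j ∈ T <;> simp [AT, hT, hij]

end MagicMatrix

theorem stmt7_general (n : ℕ) (K : Type*) [Field K] (ν : K → WithTop ℚ)
    (hνadd : ∀ a b, min (ν a) (ν b) ≤ ν (a + b))
    (hνneg : ∀ a, ν (-a) = ν a)
    (a : Fin n → K)
    (m : Fin n → Fin n → ℚ)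
    (hm : ∀ i j, i ≠ j → (m i j : WithTop ℚ) = ν (a i - a j))
    (R : Finset (Finset (Fin n)))
    (hR : ∀ T : Finset (Fin n), T ∈ R ↔
      (2 ≤ T.card ∧ ∀ i ∈ T, ∀ j ∈ T, i ≠ j → ∀ k, k ∉ T → m i k = m j k ∧ m i k < m i j))
    (α : Finset (Fin n) → ℚ)
    (hαle : ∀ T ∈ R, ∀ i ∈ T, ∀ j ∈ T, i ≠ j → α T ≤ m i j)
    (hαeq : ∀ T ∈ R, ∃ i ∈ T, ∃ j ∈ T, i ≠ j ∧ α T = m i j)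
    (maj : Finset (Fin n) → Finset (Fin n))
    (hmaj : ∀ T ∈ R, T ≠ Finset.univ →
      maj T ∈ R ∧ T ⊂ maj T ∧ ∀ S ∈ R, T ⊂ S → maj T ⊆ S)
    (γ : Finset (Fin n) → ℚ)
    (hγ : ∀ T ∈ R, γ T = if T = Finset.univ then α T else α T - α (maj T)) :
    bouquetMatrix m = ∑ T ∈ R, γ T • AT n T := by
  have hsymm : ∀ i j, i ≠ j → m i j = m j i := fun _ _ => Bouquet.symm_of_valuation hνneg hm
  have hultra : ∀ i j k, i ≠ j → j ≠ k → i ≠ k → min (m i j) (m j k) ≤ m i k :=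
    fun _ _ _ => Bouquet.min_le_of_valuation hνadd hm
  exact bouquetMatrix_eq_sum_smul_AT fun i j hij =>
    Bouquet.sum_filter_mem_mem_eq hsymm hultra hR hαle hαeq hmaj hγ hij

/-- If `A` is the magic matrix of a bouquet whose associated tree is `(R, γ)`, then
`A = ∑_{T ∈ R} γ(T) · A(T)`.  Here `R` is the family of "rameaux" of the bouquet
(subsets `T` of cardinality `≥ 2` such that `m i j > m i k = m j k` for `i ≠ j` in `T`
and `k ∉ T`; note `T₀ = univ` satisfies this vacuously), `α T` is the minimum of the
`m i j` over distinct `i, j ∈ T`, `maj T` is the smallest element of `R` strictly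
containing `T`, and `γ T = α T - α (maj T)` (with `γ T₀ = α T₀`). -/
theorem stmt7 (n : ℕ) (hn : 2 ≤ n) (K : Type*) [Field K] (ν : K → WithTop ℚ)
    (hν0 : ∀ a, ν a = ⊤ ↔ a = 0)
    (hνadd : ∀ a b, min (ν a) (ν b) ≤ ν (a + b))
    (hνneg : ∀ a, ν (-a) = ν a)
    (a : Fin n → K) (ha : Function.Injective a)
    (m : Fin n → Fin n → ℚ)
    (hm : ∀ i j, i ≠ j → (m i j : WithTop ℚ) = ν (a i - a j))
    (R : Finset (Finset (Fin n)))
    (hR : ∀ T : Finset (Fin n), T ∈ R ↔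
      (2 ≤ T.card ∧ ∀ i ∈ T, ∀ j ∈ T, i ≠ j → ∀ k, k ∉ T → m i k = m j k ∧ m i k < m i j))
    (α : Finset (Fin n) → ℚ)
    (hαle : ∀ T ∈ R, ∀ i ∈ T, ∀ j ∈ T, i ≠ j → α T ≤ m i j)
    (hαeq : ∀ T ∈ R, ∃ i ∈ T, ∃ j ∈ T, i ≠ j ∧ α T = m i j)
    (maj : Finset (Fin n) → Finset (Fin n))
    (hmaj : ∀ T ∈ R, T ≠ Finset.univ →
      maj T ∈ R ∧ T ⊂ maj T ∧ ∀ S ∈ R, T ⊂ S → maj T ⊆ S)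
    (γ : Finset (Fin n) → ℚ)
    (hγ : ∀ T ∈ R, γ T = if T = Finset.univ then α T else α T - α (maj T)) :
    bouquetMatrix m = ∑ T ∈ R, γ T • AT n T :=
  stmt7_general n K ν hνadd hνneg a m hm R hR α hαle hαeq maj hmaj γ hγ
end

section
/- For a bouquet of branches with tree (R, γ), the intersection multiplicities satisfy m_{i,j} = Σ_{T ∈ R, {i,j} ⊆ T} γ(T) for all i ≠ j. -/
open BigOperators Matrix

/-!
Two branches sharing a point are nested, so the branches containing `i` and `j` form a chain
`T₀ ⊂ T₁ ⊂ ⋯ ⊂ univ`, with `maj` the successor map. Along this chain `∑ γ` telescopes to `α T₀`.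
Finally `α T₀ = m i j`: if some pair of `T₀` had multiplicity below `m i j`, the points of `T₀`
with multiplicity above that value against `i` would form (by the ultrametric inequality) a
smaller branch containing `i` and `j`.
-/

open Finset

section Telescope

variable {P M : Type*} [PartialOrder P] [OrderTop P] [DecidableLE P] [AddCommGroup M]

theorem Finset.sum_filter_le_eq_of_telescope (S : Finset P) (succ : P → P)
    (hsucc : ∀ T ∈ S, T ≠ ⊤ → succ T ∈ S ∧ T < succ T ∧ ∀ U ∈ S, T < U → succ T ≤ U)
    (f g : P → M) (hg_top : g ⊤ = f ⊤) (hg : ∀ T ∈ S, T ≠ ⊤ → g T = f T - f (succ T))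
    {T : P} (hT : T ∈ S) : ∑ U ∈ S with T ≤ U, g U = f T := by
  classical
  induction hc : #{U ∈ S | T ≤ U} using Nat.strong_induction_on generalizing T with
  | _ c ih =>
    by_cases htop : T = ⊤
    · subst htop
      have hfilter : {U ∈ S | ⊤ ≤ U} = {⊤} := by
        ext U
        simp only [mem_filter, mem_singleton, top_le_iff]
        exact ⟨And.right, fun hU => ⟨hU ▸ hT, hU⟩⟩
      rw [hfilter, sum_singleton, hg_top]
    obtain ⟨hsuccS, hlt, hleast⟩ := hsucc T hT htop
    have hsplit : {U ∈ S | T ≤ U} = insert T {U ∈ S | succ T ≤ U} := by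
      ext U
      simp only [mem_filter, mem_insert]
      constructor
      · rintro ⟨hUS, hTU⟩
        rcases hTU.eq_or_lt with rfl | hTU
        · exact Or.inl rfl
        · exact Or.inr ⟨hUS, hleast U hUS hTU⟩
      · rintro (rfl | ⟨hUS, hU⟩)
        · exact ⟨hT, le_rfl⟩
        · exact ⟨hUS, hlt.le.trans hU⟩
    have hnot : T ∉ {U ∈ S | succ T ≤ U} := by
      simp only [mem_filter, not_and]
      exact fun _ => hlt.not_ge
    have hcard : #{U ∈ S | succ T ≤ U} < c := by
      rw [← hc, hsplit, card_insert_of_notMem hnot]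
      exact Nat.lt_succ_self _
    rw [hsplit, sum_insert hnot, ih _ hcard hsuccS rfl, hg T hT htop, sub_add_cancel]

end Telescope

section Branches

variable {ι Λ : Type*} [LinearOrder Λ]

structure IsUltrametric (m : ι → ι → Λ) : Prop where
  symm : ∀ i j, i ≠ j → m i j = m j i
  min_le : ∀ i j k, i ≠ j → j ≠ k → i ≠ k → min (m i j) (m j k) ≤ m i k

theorem IsUltrametric.of_valuation {K : Type*} [AddCommGroup K] {ν : K → WithTop Λ}
    (hνadd : ∀ a b, min (ν a) (ν b) ≤ ν (a + b)) (hνneg : ∀ a, ν (-a) = ν a)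
    {a : ι → K} {m : ι → ι → Λ} (hm : ∀ i j, i ≠ j → (m i j : WithTop Λ) = ν (a i - a j)) :
    IsUltrametric m where
  symm i j hij := by
    have h : (m i j : WithTop Λ) = m j i := by
      rw [hm i j hij, hm j i hij.symm, ← hνneg, neg_sub]
    exact_mod_cast h
  min_le i j k hij hjk hik := by
    have h := hνadd (a i - a j) (a j - a k)
    rw [sub_add_sub_cancel, ← hm i j hij, ← hm j k hjk, ← hm i k hik] at h
    exact_mod_cast h

variable {m : ι → ι → Λ}

theorem IsUltrametric.eq_of_lt (hu : IsUltrametric m) {i j k : ι} (hij : i ≠ j) (hjk : j ≠ k)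
    (hik : i ≠ k) (hlt : m i j < m j k) : m i k = m i j := by
  have hle : m i j ≤ m i k := by simpa [min_eq_left hlt.le] using hu.min_le i j k hij hjk hik
  refine hle.antisymm' (not_lt.mp fun hgt => ?_)
  have := hu.min_le i k j hik hjk.symm hij
  rw [hu.symm k j hjk.symm] at this
  exact this.not_gt (lt_min hgt hlt)

theorem IsUltrametric.lt_of_mem_filter [DecidableEq ι] (hu : IsUltrametric m) {T : Finset ι}
    {i : ι} {c : Λ} {p q : ι} (hp : p ∈ {k ∈ T | k = i ∨ c < m i k})
    (hq : q ∈ {k ∈ T | k = i ∨ c < m i k}) (hpq : p ≠ q) : c < m p q := by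
  rw [mem_filter] at hp hq
  by_cases hpi : p = i
  · subst hpi
    exact hq.2.resolve_left hpq.symm
  by_cases hqi : q = i
  · subst hqi
    rw [hu.symm p q hpq]
    exact hp.2.resolve_left hpq
  calc c < min (m p i) (m i q) := by
        rw [hu.symm p i hpi]
        exact lt_min (hp.2.resolve_left hpi) (hq.2.resolve_left hqi)
    _ ≤ m p q := hu.min_le p i q hpi (Ne.symm hqi) hpq

def IsBranch (m : ι → ι → Λ) (T : Finset ι) : Prop :=
  ∀ i ∈ T, ∀ j ∈ T, i ≠ j → ∀ k, k ∉ T → m i k = m j k ∧ m i k < m i j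

theorem isBranch_univ [Fintype ι] : IsBranch m univ :=
  fun _ _ _ _ _ k hk => absurd (mem_univ k) hk

theorem IsBranch.subset_or_subset {T₁ T₂ : Finset ι} (h₁ : IsBranch m T₁) (h₂ : IsBranch m T₂)
    {p : ι} (hp₁ : p ∈ T₁) (hp₂ : p ∈ T₂) : T₁ ⊆ T₂ ∨ T₂ ⊆ T₁ := by
  by_contra! h
  obtain ⟨k, hk₁, hk₂⟩ := not_subset.mp h.1
  obtain ⟨l, hl₂, hl₁⟩ := not_subset.mp h.2
  have hlk := (h₁ p hp₁ k hk₁ (fun e => hk₂ (e ▸ hp₂)) l hl₁).2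
  have hkl := (h₂ p hp₂ l hl₂ (fun e => hl₁ (e ▸ hp₁)) k hk₂).2
  exact hlk.not_gt hkl

-- An open ball around `i` inside `T`; `i` itself is added by hand because `m i i` is arbitrary.
theorem IsBranch.filter [DecidableEq ι] (hu : IsUltrametric m) {T : Finset ι} (hT : IsBranch m T)
    (i : ι) (c : Λ) : IsBranch m {k ∈ T | k = i ∨ c < m i k} := by
  intro p hp q hq hpq k hk
  by_cases hkT : k ∈ T
  swap
  · exact hT p (mem_filter.1 hp).1 q (mem_filter.1 hq).1 hpq k hkT
  have hki : k ≠ i := fun h => hk (mem_filter.2 ⟨hkT, Or.inl h⟩)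
  have hik : m i k ≤ c := not_lt.1 fun h => hk (mem_filter.2 ⟨hkT, Or.inr h⟩)
  have hnear : ∀ r ∈ {k ∈ T | k = i ∨ c < m i k}, m r k = m i k := by
    intro r hr
    by_cases hri : r = i
    · rw [hri]
    have hrk : r ≠ k := fun h => hk (h ▸ hr)
    have hki_lt : m k i < m i r := by
      rw [hu.symm k i hki]
      exact hik.trans_lt ((mem_filter.1 hr).2.resolve_left hri)
    rw [hu.symm r k hrk, hu.eq_of_lt hki (Ne.symm hri) (Ne.symm hrk) hki_lt, hu.symm k i hki]
  exact ⟨(hnear p hp).trans (hnear q hq).symm,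
    (hnear p hp).trans_lt (hik.trans_lt (hu.lt_of_mem_filter hp hq hpq))⟩

theorem IsBranch.le_of_forall_subset [DecidableEq ι] (hu : IsUltrametric m) {T : Finset ι}
    (hT : IsBranch m T) {i j : ι} (hi : i ∈ T) (hj : j ∈ T)
    (hmin : ∀ U, IsBranch m U → i ∈ U → j ∈ U → T ⊆ U) {p q : ι} (hp : p ∈ T) (hq : q ∈ T)
    (hpq : p ≠ q) : m i j ≤ m p q := by
  by_contra! hlt
  have hsub := hmin _ (hT.filter hu i (m p q)) (mem_filter.2 ⟨hi, Or.inl rfl⟩)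
    (mem_filter.2 ⟨hj, Or.inr hlt⟩)
  exact lt_irrefl _ (hu.lt_of_mem_filter (hsub hp) (hsub hq) hpq)

theorem exists_least_isBranch [Fintype ι] (i j : ι) :
    ∃ T, IsBranch m T ∧ i ∈ T ∧ j ∈ T ∧ ∀ U, IsBranch m U → i ∈ U → j ∈ U → T ⊆ U := by
  obtain ⟨T, hT⟩ := exists_minimal_of_wellFoundedLT (fun T => IsBranch m T ∧ i ∈ T ∧ j ∈ T)
    ⟨_, isBranch_univ, mem_univ i, mem_univ j⟩
  refine ⟨T, hT.1.1, hT.1.2.1, hT.1.2.2, fun U hU hi hj => ?_⟩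
  exact (hT.1.1.subset_or_subset hU hT.1.2.1 hi).elim id (hT.le_of_le ⟨hU, hi, hj⟩)

theorem mem_filter_iff_isBranch [DecidableEq ι] {R : Finset (Finset ι)}
    (hR : ∀ T, T ∈ R ↔ 2 ≤ #T ∧ IsBranch m T) {i j : ι} (hij : i ≠ j) {T : Finset ι} :
    T ∈ R.filter (fun T => i ∈ T ∧ j ∈ T) ↔ IsBranch m T ∧ i ∈ T ∧ j ∈ T := by
  rw [mem_filter, hR]
  exact ⟨fun h => ⟨h.1.2, h.2⟩, fun h => ⟨⟨one_lt_card.2 ⟨i, h.2.1, j, h.2.2, hij⟩, h.1⟩, h.2⟩⟩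

end Branches

theorem stmt8_general (n : ℕ) (K : Type*) [Field K] (ν : K → WithTop ℚ)
    (hνadd : ∀ a b, min (ν a) (ν b) ≤ ν (a + b))
    (hνneg : ∀ a, ν (-a) = ν a)
    (a : Fin n → K)
    (m : Fin n → Fin n → ℚ)
    (hm : ∀ i j, i ≠ j → (m i j : WithTop ℚ) = ν (a i - a j))
    (R : Finset (Finset (Fin n)))
    (hR : ∀ T : Finset (Fin n), T ∈ R ↔
      (2 ≤ T.card ∧ ∀ i ∈ T, ∀ j ∈ T, i ≠ j → ∀ k, k ∉ T → m i k = m j k ∧ m i k < m i j))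
    (α : Finset (Fin n) → ℚ)
    (hαle : ∀ T ∈ R, ∀ i ∈ T, ∀ j ∈ T, i ≠ j → α T ≤ m i j)
    (hαeq : ∀ T ∈ R, ∃ i ∈ T, ∃ j ∈ T, i ≠ j ∧ α T = m i j)
    (maj : Finset (Fin n) → Finset (Fin n))
    (hmaj : ∀ T ∈ R, T ≠ Finset.univ →
      maj T ∈ R ∧ T ⊂ maj T ∧ ∀ S ∈ R, T ⊂ S → maj T ⊆ S)
    (γ : Finset (Fin n) → ℚ)
    (hγ : ∀ T ∈ R, γ T = if T = Finset.univ then α T else α T - α (maj T)) :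
    ∀ i j : Fin n, i ≠ j →
      m i j = ∑ T ∈ R.filter (fun T => i ∈ T ∧ j ∈ T), γ T := by
  intro i j hij
  set S := R.filter (fun T => i ∈ T ∧ j ∈ T)
  have hS (T) : T ∈ S ↔ IsBranch m T ∧ i ∈ T ∧ j ∈ T := mem_filter_iff_isBranch hR hij
  have hR_of_S {T} (hT : T ∈ S) : T ∈ R := (mem_filter.1 hT).1
  obtain ⟨T₀, hT₀, hiT₀, hjT₀, hleast⟩ := exists_least_isBranch (m := m) i j
  have hT₀S : T₀ ∈ S := (hS T₀).2 ⟨hT₀, hiT₀, hjT₀⟩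
  have hα : α T₀ = m i j := by
    obtain ⟨p, hp, q, hq, hpq, hαpq⟩ := hαeq T₀ (hR_of_S hT₀S)
    refine (hαle T₀ (hR_of_S hT₀S) i hiT₀ j hjT₀ hij).antisymm (hαpq ▸ ?_)
    exact hT₀.le_of_forall_subset (.of_valuation hνadd hνneg hm) hiT₀ hjT₀ hleast hp hq hpq
  have hsucc (T) (hT : T ∈ S) (htop : T ≠ ⊤) :
      maj T ∈ S ∧ T < maj T ∧ ∀ U ∈ S, T < U → maj T ≤ U := by
    obtain ⟨hTR, hiT, hjT⟩ := mem_filter.1 hT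
    obtain ⟨hmajR, hlt, hmin⟩ := hmaj T hTR htop
    exact ⟨mem_filter.2 ⟨hmajR, hlt.subset hiT, hlt.subset hjT⟩, hlt,
      fun U hU => hmin U (hR_of_S hU)⟩
  have hγ_top : γ ⊤ = α ⊤ := by
    rw [top_eq_univ, hγ _ (hR_of_S ((hS _).2 ⟨isBranch_univ, mem_univ i, mem_univ j⟩)), if_pos rfl]
  have hγ_succ (T) (hT : T ∈ S) (htop : T ≠ ⊤) : γ T = α T - α (maj T) := by
    rw [hγ T (hR_of_S hT), if_neg (by rwa [top_eq_univ] at htop)]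
  have hT₀_le (U) (hU : U ∈ S) : T₀ ≤ U := by
    obtain ⟨hU, hiU, hjU⟩ := (hS U).1 hU
    exact hleast U hU hiU hjU
  rw [← filter_true_of_mem hT₀_le,
    sum_filter_le_eq_of_telescope S maj hsucc α γ hγ_top hγ_succ hT₀S, hα]

/-- If `A` is the magic matrix of a bouquet whose associated tree is `(R, γ)`, then
`m i j = ∑_{T ∈ R, {i,j} ⊆ T} γ(T)` for all `i ≠ j`.  Here `R` is the family of "rameaux" of the bouquet
(subsets `T` of cardinality `≥ 2` such that `m i j > m i k = m j k` for `i ≠ j` in `T`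
and `k ∉ T`; note `T₀ = univ` satisfies this vacuously), `α T` is the minimum of the
`m i j` over distinct `i, j ∈ T`, `maj T` is the smallest element of `R` strictly
containing `T`, and `γ T = α T - α (maj T)` (with `γ T₀ = α T₀`). -/
theorem stmt8 (n : ℕ) (hn : 2 ≤ n) (K : Type*) [Field K] (ν : K → WithTop ℚ)
    (hν0 : ∀ a, ν a = ⊤ ↔ a = 0)
    (hνadd : ∀ a b, min (ν a) (ν b) ≤ ν (a + b))
    (hνneg : ∀ a, ν (-a) = ν a)
    (a : Fin n → K) (ha : Function.Injective a)
    (m : Fin n → Fin n → ℚ)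
    (hm : ∀ i j, i ≠ j → (m i j : WithTop ℚ) = ν (a i - a j))
    (R : Finset (Finset (Fin n)))
    (hR : ∀ T : Finset (Fin n), T ∈ R ↔
      (2 ≤ T.card ∧ ∀ i ∈ T, ∀ j ∈ T, i ≠ j → ∀ k, k ∉ T → m i k = m j k ∧ m i k < m i j))
    (α : Finset (Fin n) → ℚ)
    (hαle : ∀ T ∈ R, ∀ i ∈ T, ∀ j ∈ T, i ≠ j → α T ≤ m i j)
    (hαeq : ∀ T ∈ R, ∃ i ∈ T, ∃ j ∈ T, i ≠ j ∧ α T = m i j)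
    (maj : Finset (Fin n) → Finset (Fin n))
    (hmaj : ∀ T ∈ R, T ≠ Finset.univ →
      maj T ∈ R ∧ T ⊂ maj T ∧ ∀ S ∈ R, T ⊂ S → maj T ⊆ S)
    (γ : Finset (Fin n) → ℚ)
    (hγ : ∀ T ∈ R, γ T = if T = Finset.univ then α T else α T - α (maj T)) :
    ∀ i j : Fin n, i ≠ j →
      m i j = ∑ T ∈ R.filter (fun T => i ∈ T ∧ j ∈ T), γ T :=
  stmt8_general n K ν hνadd hνneg a m hm R hR α hαle hαeq maj hmaj γ hγ
end

section
/- Let R be a tree species on {1,…,n} and A = Σ_{T∈R} λ(T)·A(T) with rational coefficients λ(T). Then A is diagonalizable and its eigenvalues lie in the set {0} ∪ { Σ_{T ∈ R, T ⊇ T_1} λ(T)·n(T) : T_1 ∈ R }. -/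
/-!
Write `u_S` for the uniform probability vector on `S`. A vector that is supported on a member
`S₀` of `R`, has zero sum and is constant on every member of `R` strictly inside `S₀` is an
eigenvector of `A` with eigenvalue `∑_{T ⊇ S₀} λ(T)·n(T)`: on it `A(T)` acts as `n(T)` when
`T ⊇ S₀` and as `0` otherwise. This applies to `u_T - u_P` for `P` the least member strictly above
`T`, and to `e_i - u_T` for `T` the least member containing `i`; together with the all-ones vector
(eigenvalue `0`) these telescope to every `e_i`, so they span `ℚⁿ` and contain an eigenbasis.
-/

open BigOperators Matrix

open Module

namespace Module.End

variable {K V ι : Type*} [Field K] [AddCommGroup V] [Module K V]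

theorem exists_basis_of_span_eigenvectors_eq_top (f : End K V) (S : Set K) (b₀ : Basis ι K V)
    (h : Submodule.span K {v | ∃ μ ∈ S, f v = μ • v} = ⊤) :
    ∃ (b : Basis ι K V) (μ : ι → K), ∀ k, μ k ∈ S ∧ f (b k) = μ k • b k := by
  let b := Basis.ofSpan h.ge
  have hb : ∀ k, b k ∈ {v | ∃ μ ∈ S, f v = μ • v} :=
    fun k => Basis.ofSpan_subset h.ge (Set.mem_range_self k)
  choose μ hμ using hb
  let e := b.indexEquiv b₀
  exact ⟨b.reindex e, fun k => μ (e.symm k), fun k => by simpa using hμ (e.symm k)⟩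

variable [Fintype ι] [DecidableEq ι] {f : End K V} {b : Basis ι K V} {μ : ι → K}

theorem toMatrix_eq_diagonal_of_apply_basis (h : ∀ k, f (b k) = μ k • b k) :
    LinearMap.toMatrix b b f = diagonal μ := by
  ext i j
  rcases eq_or_ne i j with rfl | hij
  · simp [LinearMap.toMatrix_apply, h]
  · simp [LinearMap.toMatrix_apply, h, hij]

theorem hasEigenvalue_iff_of_apply_basis (h : ∀ k, f (b k) = μ k • b k) {c : K} :
    f.HasEigenvalue c ↔ ∃ k, μ k = c := by
  rw [← Matrix.toLin_toMatrix b b f, toMatrix_eq_diagonal_of_apply_basis h,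
    hasEigenvalue_toLin_diagonal_iff]

end Module.End

theorem Matrix.inv_mul_mul_basisFun_toMatrix_eq_diagonal {K ι : Type*} [Field K] [Fintype ι]
    [DecidableEq ι] {A : Matrix ι ι K} {b : Basis ι K (ι → K)} {μ : ι → K}
    (h : ∀ k, A *ᵥ b k = μ k • b k) :
    ((Pi.basisFun K ι).toMatrix b)⁻¹ * A * (Pi.basisFun K ι).toMatrix b = diagonal μ := by
  have hinv : ((Pi.basisFun K ι).toMatrix b)⁻¹ = b.toMatrix (Pi.basisFun K ι) :=
    Matrix.inv_eq_left_inv (b.toMatrix_mul_toMatrix_flip _)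
  rw [hinv, ← Module.End.toMatrix_eq_diagonal_of_apply_basis (f := A.toLin') (by simpa using h),
    ← basis_toMatrix_mul_linearMap_toMatrix_mul_basis_toMatrix b (Pi.basisFun K ι) b
      (Pi.basisFun K ι),
    LinearMap.toMatrix_eq_toMatrix', LinearMap.toMatrix'_toLin']

theorem Matrix.isUnit_basisFun_toMatrix {K ι : Type*} [Field K] [Fintype ι]
    [DecidableEq ι] (b : Basis ι K (ι → K)) : IsUnit ((Pi.basisFun K ι).toMatrix b) :=
  letI := (Pi.basisFun K ι).invertibleToMatrix b
  isUnit_of_invertible _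

def IsLaminar {α : Type*} (R : Finset (Finset α)) : Prop :=
  ∀ T1 ∈ R, ∀ T2 ∈ R, Disjoint T1 T2 ∨ T1 ⊆ T2 ∨ T2 ⊆ T1

namespace IsLaminar

variable {α : Type*} {R : Finset (Finset α)}

theorem exists_least_of_forall_mem (hR : IsLaminar R) {F : Finset (Finset α)} (hFR : F ⊆ R)
    (hne : F.Nonempty) {x : α} (hx : ∀ T ∈ F, x ∈ T) : ∃ T ∈ F, ∀ S ∈ F, T ⊆ S := by
  obtain ⟨T, hT, hmin⟩ := F.exists_min_image Finset.card hne
  refine ⟨T, hT, fun S hS => ?_⟩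
  rcases hR T (hFR hT) S (hFR hS) with hdisj | hTS | hST
  · exact absurd (hx S hS) (Finset.disjoint_left.mp hdisj (hx T hT))
  · exact hTS
  · exact (Finset.eq_of_subset_of_card_le hST (hmin S hS)).ge

theorem exists_least_mem (hR : IsLaminar R) {x : α} (hx : ∃ T ∈ R, x ∈ T) :
    ∃ T ∈ R, x ∈ T ∧ ∀ S ∈ R, x ∈ S → T ⊆ S := by
  classical
  obtain ⟨T, hT, hleast⟩ := hR.exists_least_of_forall_mem (Finset.filter_subset (x ∈ ·) R)
    (by simpa [Finset.filter_nonempty_iff] using hx) (fun T hT => (Finset.mem_filter.mp hT).2)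
  rw [Finset.mem_filter] at hT
  exact ⟨T, hT.1, hT.2, fun S hS hxS => hleast S (Finset.mem_filter.mpr ⟨hS, hxS⟩)⟩

theorem exists_least_ssuperset (hR : IsLaminar R) {T : Finset α} (hT : T.Nonempty)
    (hsup : ∃ S ∈ R, T ⊂ S) : ∃ P ∈ R, T ⊂ P ∧ ∀ S ∈ R, T ⊂ S → P ⊆ S := by
  classical
  obtain ⟨x, hx⟩ := hT
  obtain ⟨P, hP, hleast⟩ := hR.exists_least_of_forall_mem (Finset.filter_subset (T ⊂ ·) R)
    (by simpa [Finset.filter_nonempty_iff] using hsup)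
    (fun S hS => (Finset.mem_filter.mp hS).2.subset hx)
  rw [Finset.mem_filter] at hP
  exact ⟨P, hP.1, hP.2, fun S hS hTS => hleast S (Finset.mem_filter.mpr ⟨hS, hTS⟩)⟩

end IsLaminar

variable {n : ℕ}

theorem AT_mulVec_apply (T : Finset (Fin n)) (v : Fin n → ℚ) (i : Fin n) :
    (AT n T *ᵥ v) i = if i ∈ T then T.card * v i - ∑ j ∈ T, v j else 0 := by
  split_ifs with hi
  · have hrow : ∀ j, AT n T i j =
        if j ∈ T then (T.card : ℚ) * (Pi.single i 1 : Fin n → ℚ) j - 1 else 0 := by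
      intro j
      by_cases hj : j ∈ T <;> by_cases hij : i = j <;> simp [AT, hi, hj, hij, eq_comm]
    simp only [mulVec, dotProduct, hrow, ite_mul, zero_mul, Finset.sum_ite_mem,
      Finset.univ_inter, sub_mul, Finset.sum_sub_distrib, mul_assoc, ← Finset.mul_sum]
    simp [Pi.single_apply, hi]
  · simp [mulVec, dotProduct, AT, hi]

theorem AT_mulVec_eq_zero_of_forall_eq {T : Finset (Fin n)} {v : Fin n → ℚ}
    (hv : ∀ j ∈ T, ∀ j' ∈ T, v j = v j') : AT n T *ᵥ v = 0 := by
  funext i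
  rw [AT_mulVec_apply]
  split_ifs with hi
  · rw [Finset.sum_congr rfl fun j hj => hv j hj i hi]
    simp
  · rfl

theorem AT_mulVec_eq_smul_of_sum_eq_zero {T : Finset (Fin n)} {v : Fin n → ℚ}
    (hsupp : ∀ i ∉ T, v i = 0) (hsum : ∑ i, v i = 0) : AT n T *ᵥ v = (T.card : ℚ) • v := by
  have hsumT : ∑ j ∈ T, v j = 0 := by
    rwa [Finset.sum_subset (Finset.subset_univ T) fun j _ hj => hsupp j hj]
  funext i
  rw [AT_mulVec_apply, hsumT, Pi.smul_apply, smul_eq_mul]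
  split_ifs with hi
  · ring
  · rw [hsupp i hi, mul_zero]

def uniformVec (S : Finset (Fin n)) : Fin n → ℚ :=
  fun i => if i ∈ S then (S.card : ℚ)⁻¹ else 0

theorem sum_uniformVec {S : Finset (Fin n)} (hS : S.Nonempty) : ∑ i, uniformVec S i = 1 := by
  simp only [uniformVec, Finset.sum_ite_mem, Finset.univ_inter, Finset.sum_const, nsmul_eq_mul]
  exact mul_inv_cancel₀ (Nat.cast_ne_zero.mpr hS.card_pos.ne')

theorem uniformVec_univ : uniformVec (Finset.univ : Finset (Fin n)) = (n : ℚ)⁻¹ • fun _ => 1 := by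
  funext i
  simp [uniformVec]

theorem uniformVec_eq_of_subset_or_disjoint {S T : Finset (Fin n)} (h : T ⊆ S ∨ Disjoint T S)
    {j j' : Fin n} (hj : j ∈ T) (hj' : j' ∈ T) : uniformVec S j = uniformVec S j' := by
  rcases h with hTS | hdisj
  · simp [uniformVec, hTS hj, hTS hj']
  · simp [uniformVec, Finset.disjoint_left.mp hdisj hj, Finset.disjoint_left.mp hdisj hj']

def magicMatrix (R : Finset (Finset (Fin n))) (lam : Finset (Fin n) → ℚ) :
    Matrix (Fin n) (Fin n) ℚ :=
  ∑ T ∈ R, lam T • AT n T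

def treeEigenvalue (R : Finset (Finset (Fin n))) (lam : Finset (Fin n) → ℚ)
    (T1 : Finset (Fin n)) : ℚ :=
  ∑ T ∈ R.filter (fun T => T1 ⊆ T), lam T * T.card

section Magic

variable {R : Finset (Finset (Fin n))} (lam : Finset (Fin n) → ℚ)

theorem magicMatrix_mulVec_one : magicMatrix R lam *ᵥ (fun _ => 1) = 0 := by
  rw [magicMatrix, sum_mulVec]
  exact Finset.sum_eq_zero fun T _ => by
    rw [smul_mulVec, AT_mulVec_eq_zero_of_forall_eq fun _ _ _ _ => rfl, smul_zero]

theorem magicMatrix_mulVec_eq_smul (hR : IsLaminar R) {S₀ : Finset (Fin n)} (hS₀ : S₀ ∈ R)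
    {w : Fin n → ℚ} (hsupp : ∀ i ∉ S₀, w i = 0) (hsum : ∑ i, w i = 0)
    (hconst : ∀ T ∈ R, T ⊂ S₀ → ∀ j ∈ T, ∀ j' ∈ T, w j = w j') :
    magicMatrix R lam *ᵥ w = treeEigenvalue R lam S₀ • w := by
  rw [magicMatrix, sum_mulVec, treeEigenvalue, Finset.sum_smul, Finset.sum_filter]
  refine Finset.sum_congr rfl fun T hT => ?_
  rw [smul_mulVec]
  split_ifs with hS₀T
  · rw [AT_mulVec_eq_smul_of_sum_eq_zero (fun i hi => hsupp i fun h => hi (hS₀T h)) hsum,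
      smul_smul]
  · rw [AT_mulVec_eq_zero_of_forall_eq, smul_zero]
    rcases hR T hT S₀ hS₀ with hdisj | hTS₀ | hS₀T'
    · intro j hj j' hj'
      rw [hsupp j (Finset.disjoint_left.mp hdisj hj), hsupp j' (Finset.disjoint_left.mp hdisj hj')]
    · exact hconst T hT (hTS₀.ssubset_of_not_subset hS₀T)
    · exact absurd hS₀T' hS₀T

theorem magicMatrix_mulVec_uniformVec_sub (hR : IsLaminar R) {T P : Finset (Fin n)}
    (hT : T ∈ R) (hTne : T.Nonempty) (hP : P ∈ R) (hTP : T ⊂ P)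
    (hleast : ∀ S ∈ R, T ⊂ S → P ⊆ S) :
    magicMatrix R lam *ᵥ (uniformVec T - uniformVec P) =
      treeEigenvalue R lam P • (uniformVec T - uniformVec P) := by
  refine magicMatrix_mulVec_eq_smul lam hR hP (fun i hi => ?_) ?_ fun S hS hSP j hj j' hj' => ?_
  · have hiT : i ∉ T := fun h => hi (hTP.subset h)
    simp [uniformVec, hi, hiT]
  · simp [Finset.sum_sub_distrib, sum_uniformVec hTne, sum_uniformVec (hTne.mono hTP.subset)]
  · have hST : S ⊆ T ∨ Disjoint S T := by
      rcases hR S hS T hT with hdisj | hST | hTS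
      · exact .inr hdisj
      · exact .inl hST
      · rcases hTS.eq_or_ssubset with rfl | hTS
        · exact .inl subset_rfl
        · exact absurd (hleast S hS hTS) hSP.not_subset
    simp only [Pi.sub_apply, uniformVec_eq_of_subset_or_disjoint hST hj hj',
      uniformVec_eq_of_subset_or_disjoint (.inl hSP.subset) hj hj']

theorem magicMatrix_mulVec_single_sub_uniformVec (hR : IsLaminar R) {i : Fin n}
    {T : Finset (Fin n)} (hT : T ∈ R) (hi : i ∈ T) (hleast : ∀ S ∈ R, i ∈ S → T ⊆ S) :
    magicMatrix R lam *ᵥ (Pi.single i 1 - uniformVec T) =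
      treeEigenvalue R lam T • (Pi.single i 1 - uniformVec T) := by
  refine magicMatrix_mulVec_eq_smul lam hR hT (fun j hj => ?_) ?_ fun S hS hST j hj j' hj' => ?_
  · have hji : j ≠ i := fun h => hj (h ▸ hi)
    simp [uniformVec, hj, hji]
  · simp [Finset.sum_sub_distrib, sum_uniformVec ⟨i, hi⟩]
  · have hiS : i ∉ S := fun h => hST.not_subset (hleast S hS h)
    have hji : j ≠ i := fun h => hiS (h ▸ hj)
    have hj'i : j' ≠ i := fun h => hiS (h ▸ hj')
    simp [hji, hj'i, uniformVec_eq_of_subset_or_disjoint (.inl hST.subset) hj hj']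

end Magic

def treeEigenvalues (R : Finset (Finset (Fin n))) (lam : Finset (Fin n) → ℚ) : Set ℚ :=
  {c | c = 0 ∨ ∃ T1 ∈ R, c = treeEigenvalue R lam T1}

def magicEigenvectors (R : Finset (Finset (Fin n))) (lam : Finset (Fin n) → ℚ) :
    Set (Fin n → ℚ) :=
  {v | ∃ μ ∈ treeEigenvalues R lam, magicMatrix R lam *ᵥ v = μ • v}

section Span

open Submodule

variable {R : Finset (Finset (Fin n))} (lam : Finset (Fin n) → ℚ)

theorem uniformVec_mem_span_magicEigenvectors (hR : IsLaminar R) (huniv : Finset.univ ∈ R)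
    (T : Finset (Fin n)) (hT : T ∈ R) (hTne : T.Nonempty) : uniformVec T ∈ span ℚ (magicEigenvectors R lam) := by
  induction T using WellFoundedGT.induction with
  | _ T ih =>
  by_cases hTu : T = Finset.univ
  · subst hTu
    rw [uniformVec_univ]
    exact smul_mem _ _ <| subset_span ⟨0, .inl rfl, by rw [magicMatrix_mulVec_one, zero_smul]⟩
  · obtain ⟨P, hP, hTP, hleast⟩ :=
      hR.exists_least_ssuperset hTne ⟨_, huniv, Finset.ssubset_univ_iff.mpr hTu⟩
    rw [← sub_add_cancel (uniformVec T) (uniformVec P)]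
    exact add_mem (subset_span ⟨_, .inr ⟨P, hP, rfl⟩,
      magicMatrix_mulVec_uniformVec_sub lam hR hT hTne hP hTP hleast⟩)
      (ih P hTP hP (hTne.mono hTP.subset))

theorem single_mem_span_magicEigenvectors (hR : IsLaminar R) (huniv : Finset.univ ∈ R)
    (i : Fin n) : Pi.single i 1 ∈ span ℚ (magicEigenvectors R lam) := by
  obtain ⟨T, hT, hi, hleast⟩ := hR.exists_least_mem ⟨_, huniv, Finset.mem_univ i⟩
  rw [← sub_add_cancel (Pi.single i 1) (uniformVec T)]
  exact add_mem (subset_span ⟨_, .inr ⟨T, hT, rfl⟩,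
    magicMatrix_mulVec_single_sub_uniformVec lam hR hT hi hleast⟩)
    (uniformVec_mem_span_magicEigenvectors lam hR huniv T hT ⟨i, hi⟩)

theorem span_magicEigenvectors_eq_top (hR : IsLaminar R) (huniv : Finset.univ ∈ R) :
    span ℚ (magicEigenvectors R lam) = ⊤ :=
  (eq_top_iff_forall_basis_mem (Pi.basisFun ℚ (Fin n))).mpr fun i => by
    simpa using single_mem_span_magicEigenvectors lam hR huniv i

end Span

theorem stmt10_general (n : ℕ) (R : Finset (Finset (Fin n)))
    (huniv : Finset.univ ∈ R)
    (hnest : ∀ T1 ∈ R, ∀ T2 ∈ R, Disjoint T1 T2 ∨ T1 ⊆ T2 ∨ T2 ⊆ T1)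
    (lam : Finset (Fin n) → ℚ) :
    (∃ P : Matrix (Fin n) (Fin n) ℚ, IsUnit P ∧
        (P⁻¹ * (∑ T ∈ R, lam T • AT n T) * P).IsDiag) ∧
    (∀ c : ℚ, Module.End.HasEigenvalue (∑ T ∈ R, lam T • AT n T).mulVecLin c →
      c = 0 ∨ ∃ T1 ∈ R, c = ∑ T ∈ R.filter (fun T => T1 ⊆ T), lam T * T.card) := by
  obtain ⟨b, μ, hb⟩ := Module.End.exists_basis_of_span_eigenvectors_eq_top
    (magicMatrix R lam).toLin' (treeEigenvalues R lam) (Pi.basisFun ℚ (Fin n))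
    (span_magicEigenvectors_eq_top lam hnest huniv)
  have heig : ∀ k, magicMatrix R lam *ᵥ b k = μ k • b k := fun k => (hb k).2
  refine ⟨⟨_, isUnit_basisFun_toMatrix b, ?_⟩, fun c hc => ?_⟩
  · rw [← magicMatrix, inv_mul_mul_basisFun_toMatrix_eq_diagonal heig]
    exact isDiag_diagonal μ
  · obtain ⟨k, rfl⟩ := (Module.End.hasEigenvalue_iff_of_apply_basis heig).mp hc
    exact (hb k).1

/-- An element `A = ∑_{T ∈ R} λ(T)·A(T)` of the magic algebra of a tree species `R` is
diagonalizable, and its eigenvalues lie in `{0} ∪ {∑_{T ⊇ T₁} λ(T)·|T| : T₁ ∈ R}`. -/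
theorem stmt10 (n : ℕ) (R : Finset (Finset (Fin n)))
    (huniv : Finset.univ ∈ R)
    (hcard : ∀ T ∈ R, 2 ≤ T.card)
    (hnest : ∀ T1 ∈ R, ∀ T2 ∈ R, Disjoint T1 T2 ∨ T1 ⊆ T2 ∨ T2 ⊆ T1)
    (lam : Finset (Fin n) → ℚ) :
    (∃ P : Matrix (Fin n) (Fin n) ℚ, IsUnit P ∧
        (P⁻¹ * (∑ T ∈ R, lam T • AT n T) * P).IsDiag) ∧
    (∀ c : ℚ, Module.End.HasEigenvalue (∑ T ∈ R, lam T • AT n T).mulVecLin c →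
      c = 0 ∨ ∃ T1 ∈ R, c = ∑ T ∈ R.filter (fun T => T1 ⊆ T), lam T * T.card) :=
  stmt10_general n R huniv hnest lam
end

section
/- Every symmetric rational magic matrix A satisfying the exceptional property admits a decomposition A = s(A)·I + Σ_{T ∈ R} γ(T)·A(T) for some tree (R, γ) with γ(T_0) = inf{−α_{i,j} : i ≠ j}. -/
open BigOperators Matrix

/-- A matrix is *magic* with sum `c` if all of its row sums and column sums equal `c`. -/
def IsMagic {n : ℕ} {K : Type*} [AddCommMonoid K] (A : Matrix (Fin n) (Fin n) K) (c : K) : Prop :=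
  (∀ i, ∑ j, A i j = c) ∧ (∀ j, ∑ i, A i j = c)

/-!
For a symmetric matrix the exceptional property is the ultrametric inequality
`A i k ≤ max (A i j) (A j k)` on distinct indices, so for every level `v` the relation
`i = k ∨ A i k ≤ v` is an equivalence relation. Its classes, over all off-diagonal values `v`,
form a laminar family containing `univ` (the class at the maximal value). Give a class `T` the
weight `∑ (v⁺ - v)` over the levels `v` at which `T` is a class, where `v⁺` is the next
off-diagonal value and `0` above the maximum. For `i ≠ j` the class of `i` at level `v`
contains `j` exactly when `A i j ≤ v`, so the weights of the classes containing `i` and `j`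
telescope to `-A i j`. The diagonal is then forced by the row sums, as every `A(T)` has row
sums `0`.
-/

namespace UltrametricMatrix

section NextLevel

variable {α : Type*} [LinearOrder α]

def nextLevel [Zero α] (s : Finset α) (v : α) : α := {w ∈ s | v < w}.min.untopD 0

lemma nextLevel_of_forall_le [Zero α] {s : Finset α} {v : α} (h : ∀ w ∈ s, w ≤ v) :
    nextLevel s v = 0 := by
  have : {w ∈ s | v < w} = ∅ := Finset.filter_false_of_mem fun w hw => not_lt.mpr (h w hw)
  simp [nextLevel, this]

lemma nextLevel_eq_min' [Zero α] {s : Finset α} {v : α} (h : {w ∈ s | v < w}.Nonempty) :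
    nextLevel s v = {w ∈ s | v < w}.min' h := by
  rw [nextLevel, ← Finset.coe_min' h]
  rfl

lemma lt_nextLevel [Zero α] {s : Finset α} {v w : α} (hw : w ∈ s) (hvw : v < w) :
    v < nextLevel s v := by
  have h : {w ∈ s | v < w}.Nonempty := ⟨w, Finset.mem_filter.mpr ⟨hw, hvw⟩⟩
  rw [nextLevel_eq_min' h]
  exact (Finset.mem_filter.mp (Finset.min'_mem _ h)).2

lemma nextLevel_insert_of_lt [Zero α] {s : Finset α} {m v : α} (hmv : m < v) :
    nextLevel (insert m s) v = nextLevel s v := by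
  rw [nextLevel, nextLevel, Finset.filter_insert, if_neg hmv.not_gt]

theorem sum_nextLevel_sub [AddCommGroup α] (s : Finset α) {a : α} (ha : a ∈ s) :
    ∑ v ∈ s with a ≤ v, (nextLevel s v - v) = -a := by
  induction s using Finset.induction_on_min generalizing a with
  | empty => simp at ha
  | insert m s hm ih =>
    have hnext : ∀ v ∈ s, nextLevel (insert m s) v = nextLevel s v :=
      fun v hv => nextLevel_insert_of_lt (hm v hv)
    rcases Finset.mem_insert.mp ha with rfl | ha
    · have hfilter : {v ∈ insert a s | a ≤ v} = insert a s :=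
        Finset.filter_true_of_mem fun v hv =>
          (Finset.mem_insert.mp hv).elim (fun h => h.ge) fun hv => (hm v hv).le
      rw [hfilter, Finset.sum_insert fun h => (hm a h).false,
        Finset.sum_congr rfl fun v hv => by rw [hnext v hv]]
      rcases s.eq_empty_or_nonempty with rfl | hs
      · simp [nextLevel_of_forall_le]
      · have hmin : nextLevel (insert a s) a = s.min' hs := by
          rw [nextLevel_eq_min' ⟨_, Finset.mem_filter.mpr
            ⟨Finset.mem_insert_of_mem (s.min'_mem hs), hm _ (s.min'_mem hs)⟩⟩]
          congr 1
          rw [Finset.filter_insert, if_neg (lt_irrefl a), Finset.filter_true_of_mem hm]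
        have hsum := ih (s.min'_mem hs)
        rw [Finset.filter_true_of_mem fun v hv => s.min'_le v hv] at hsum
        rw [hmin, hsum]
        abel
    · have hfilter : {v ∈ insert m s | a ≤ v} = {v ∈ s | a ≤ v} := by
        rw [Finset.filter_insert, if_neg (hm a ha).not_ge]
      rw [hfilter, ← ih ha]
      exact Finset.sum_congr rfl fun v hv => by rw [hnext v (Finset.mem_filter.mp hv).1]

end NextLevel

section Clusters

variable {ι α : Type*} [LinearOrder α] (A : Matrix ι ι α)

def OffDiagUltrametric : Prop :=
  ∀ i j k, i ≠ j → j ≠ k → i ≠ k → A i k ≤ max (A i j) (A j k)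

lemma offDiagUltrametric_of_exceptional (hA : A.IsSymm)
    (hexc : ∀ i j k : ι, i ≠ j → j ≠ k → k ≠ i →
      ((A i j = A j k ∧ A k i ≤ A i j) ∨ (A j k = A k i ∧ A i j ≤ A j k) ∨
        (A i j = A k i ∧ A j k ≤ A i j))) :
    OffDiagUltrametric A := by
  intro i j k hij hjk hik
  rw [← hA.apply i k]
  rcases hexc i j k hij hjk hik.symm with ⟨-, h⟩ | ⟨h, -⟩ | ⟨h, -⟩
  · exact le_max_of_le_left h
  · exact le_max_of_le_right h.symm.le
  · exact le_max_of_le_left h.symm.le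

variable {A} in
lemma OffDiagUltrametric.eq_or_le_trans (hult : OffDiagUltrametric A) {v : α} {i j k : ι}
    (hij : i = j ∨ A i j ≤ v) (hjk : j = k ∨ A j k ≤ v) : i = k ∨ A i k ≤ v := by
  rcases hij with rfl | hij
  · exact hjk
  rcases hjk with rfl | hjk
  · exact Or.inr hij
  obtain rfl | hik := eq_or_ne i k
  · exact Or.inl rfl
  obtain rfl | hij' := eq_or_ne i j
  · exact Or.inr hjk
  obtain rfl | hjk' := eq_or_ne j k
  · exact Or.inr hij
  exact Or.inr ((hult i j k hij' hjk' hik).trans (max_le hij hjk))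

variable [Fintype ι]

def offDiagValues : Finset α := (Finset.univ.offDiag : Finset (ι × ι)).image fun p => A p.1 p.2

variable {A} in
lemma mem_offDiagValues {v : α} : v ∈ offDiagValues A ↔ ∃ i j, i ≠ j ∧ A i j = v := by
  simp [offDiagValues]

variable {A} in
lemma apply_mem_offDiagValues {i j : ι} (hij : i ≠ j) : A i j ∈ offDiagValues A :=
  mem_offDiagValues.mpr ⟨i, j, hij, rfl⟩

lemma offDiagValues_nonempty [Nontrivial ι] : (offDiagValues A).Nonempty := by
  obtain ⟨i, j, hij⟩ := exists_pair_ne ι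
  exact ⟨_, apply_mem_offDiagValues hij⟩

variable [DecidableEq ι]

def cluster (v : α) (i : ι) : Finset ι := {k | i = k ∨ A i k ≤ v}

def clustersAt (v : α) : Finset (Finset ι) := Finset.univ.image (cluster A v)

def clusters : Finset (Finset ι) :=
  {T ∈ (offDiagValues A).biUnion (clustersAt A) | 2 ≤ T.card}

variable {A}

lemma mem_cluster {v : α} {i k : ι} : k ∈ cluster A v i ↔ i = k ∨ A i k ≤ v := by
  simp [cluster]

lemma self_mem_cluster (v : α) (i : ι) : i ∈ cluster A v i := mem_cluster.mpr (Or.inl rfl)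

lemma cluster_mono {v w : α} (h : v ≤ w) (i : ι) : cluster A v i ⊆ cluster A w i :=
  fun _ hk => mem_cluster.mpr ((mem_cluster.mp hk).imp_right h.trans')

lemma cluster_max'_eq_univ [Nontrivial ι] (i : ι) :
    cluster A ((offDiagValues A).max' (offDiagValues_nonempty A)) i = Finset.univ :=
  Finset.eq_univ_of_forall fun k => mem_cluster.mpr <|
    (eq_or_ne i k).imp_right fun hik =>
      (offDiagValues A).le_max' _ (apply_mem_offDiagValues hik)

lemma mem_clustersAt {v : α} {T : Finset ι} : T ∈ clustersAt A v ↔ ∃ i, cluster A v i = T := by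
  simp [clustersAt]

lemma mem_clusters {T : Finset ι} :
    T ∈ clusters A ↔ (∃ v ∈ offDiagValues A, T ∈ clustersAt A v) ∧ 2 ≤ T.card := by
  simp only [clusters, Finset.mem_filter, Finset.mem_biUnion]

lemma two_le_card_of_mem_clusters {T : Finset ι} (hT : T ∈ clusters A) : 2 ≤ T.card :=
  (mem_clusters.mp hT).2

lemma univ_mem_clusters [Nontrivial ι] : Finset.univ ∈ clusters A := by
  refine mem_clusters.mpr ⟨⟨_, Finset.max'_mem _ (offDiagValues_nonempty A),
    mem_clustersAt.mpr ⟨Classical.arbitrary ι, cluster_max'_eq_univ _⟩⟩, ?_⟩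
  rw [Finset.card_univ]
  exact Fintype.one_lt_card

section

variable (hA : A.IsSymm) (hult : OffDiagUltrametric A)
include hA hult

lemma cluster_eq_of_mem {v : α} {i j : ι} (hj : j ∈ cluster A v i) :
    cluster A v j = cluster A v i := by
  have hji : j = i ∨ A j i ≤ v := by
    rcases mem_cluster.mp hj with rfl | h
    · exact Or.inl rfl
    · exact Or.inr ((hA.apply i j).trans_le h)
  ext k
  simp only [mem_cluster]
  exact ⟨hult.eq_or_le_trans (mem_cluster.mp hj), hult.eq_or_le_trans hji⟩

lemma le_of_mem_cluster {v : α} {k a b : ι} (ha : a ∈ cluster A v k) (hb : b ∈ cluster A v k)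
    (hab : a ≠ b) : A a b ≤ v := by
  rw [← cluster_eq_of_mem hA hult ha] at hb
  exact (mem_cluster.mp hb).resolve_left hab

lemma cluster_disjoint_or_subset (v w : α) (i j : ι) :
    Disjoint (cluster A v i) (cluster A w j) ∨ cluster A v i ⊆ cluster A w j ∨
      cluster A w j ⊆ cluster A v i := by
  refine or_iff_not_imp_left.mpr fun hd => ?_
  obtain ⟨x, hxi, hxj⟩ := Finset.not_disjoint_iff.mp hd
  rw [← cluster_eq_of_mem hA hult hxi, ← cluster_eq_of_mem hA hult hxj]
  rcases le_total v w with h | h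
  · exact Or.inl (cluster_mono h x)
  · exact Or.inr (cluster_mono h x)

lemma clusters_laminar {S T : Finset ι} (hS : S ∈ clusters A) (hT : T ∈ clusters A) :
    Disjoint S T ∨ S ⊆ T ∨ T ⊆ S := by
  obtain ⟨⟨v, -, hS⟩, -⟩ := mem_clusters.mp hS
  obtain ⟨⟨w, -, hT⟩, -⟩ := mem_clusters.mp hT
  obtain ⟨i, rfl⟩ := mem_clustersAt.mp hS
  obtain ⟨j, rfl⟩ := mem_clustersAt.mp hT
  exact cluster_disjoint_or_subset hA hult v w i j

lemma levels_of_univ [Nontrivial ι] :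
    {v ∈ offDiagValues A | Finset.univ ∈ clustersAt A v} =
      {(offDiagValues A).max' (offDiagValues_nonempty A)} := by
  ext v
  simp only [Finset.mem_filter, Finset.mem_singleton, mem_clustersAt]
  constructor
  · rintro ⟨hv, k, hk⟩
    obtain ⟨p, q, hpq, hM⟩ :=
      mem_offDiagValues.mp (Finset.max'_mem _ (offDiagValues_nonempty A))
    refine le_antisymm (Finset.le_max' _ _ hv) ?_
    rw [← hM]
    exact le_of_mem_cluster hA hult (hk ▸ Finset.mem_univ p) (hk ▸ Finset.mem_univ q) hpq
  · rintro rfl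
    exact ⟨Finset.max'_mem _ _, Classical.arbitrary ι, cluster_max'_eq_univ _⟩

end

end Clusters

section Weight

variable {ι α : Type*} [Fintype ι] [DecidableEq ι] [AddCommGroup α] [LinearOrder α]
  (A : Matrix ι ι α)

def weight (T : Finset ι) : α :=
  ∑ v ∈ offDiagValues A with T ∈ clustersAt A v, (nextLevel (offDiagValues A) v - v)

variable {A}

lemma weight_univ [Nontrivial ι] (hA : A.IsSymm) (hult : OffDiagUltrametric A) :
    weight A Finset.univ = -(offDiagValues A).max' (offDiagValues_nonempty A) := by
  rw [weight, levels_of_univ hA hult, Finset.sum_singleton,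
    nextLevel_of_forall_le fun w hw => Finset.le_max' _ _ hw, zero_sub]

lemma weight_pos [IsOrderedAddMonoid α] {T : Finset ι} (hT : T ∈ clusters A)
    (hTu : T ≠ Finset.univ) : 0 < weight A T := by
  obtain ⟨⟨v, hv, hvT⟩, -⟩ := mem_clusters.mp hT
  refine Finset.sum_pos (fun w hw => ?_) ⟨v, Finset.mem_filter.mpr ⟨hv, hvT⟩⟩
  obtain ⟨hw, k, rfl⟩ := (Finset.mem_filter.mp hw).imp_right mem_clustersAt.mp
  obtain ⟨l, hl⟩ : ∃ l, l ∉ cluster A w k := by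
    by_contra! h
    exact hTu (Finset.eq_univ_of_forall h)
  rw [mem_cluster, not_or, not_le] at hl
  exact sub_pos.mpr (lt_nextLevel (apply_mem_offDiagValues hl.1) hl.2)

theorem sum_weight_of_ne (hA : A.IsSymm) (hult : OffDiagUltrametric A) {i j : ι} (hij : i ≠ j) :
    ∑ T ∈ clusters A with i ∈ T ∧ j ∈ T, weight A T = -A i j := by
  calc ∑ T ∈ clusters A with i ∈ T ∧ j ∈ T, weight A T
      = ∑ v ∈ offDiagValues A with A i j ≤ v, ∑ _T ∈ {cluster A v i},
          (nextLevel (offDiagValues A) v - v) := by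
        refine Finset.sum_comm' fun T v => ?_
        simp only [Finset.mem_filter, Finset.mem_singleton, mem_clusters, mem_clustersAt]
        constructor
        · rintro ⟨⟨-, hi, hj⟩, hv, k, rfl⟩
          rw [← cluster_eq_of_mem hA hult hi] at hj ⊢
          exact ⟨rfl, hv, (mem_cluster.mp hj).resolve_left hij⟩
        · rintro ⟨rfl, hv, hle⟩
          have hj : j ∈ cluster A v i := mem_cluster.mpr (Or.inr hle)
          exact ⟨⟨⟨⟨v, hv, i, rfl⟩, Finset.one_lt_card.mpr
            ⟨i, self_mem_cluster v i, j, hj, hij⟩⟩, self_mem_cluster v i, hj⟩, hv, i, rfl⟩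
    _ = -A i j := by
        simp only [Finset.sum_singleton]
        exact sum_nextLevel_sub _ (apply_mem_offDiagValues hij)

end Weight

end UltrametricMatrix

lemma Matrix.eq_of_offDiag_apply_eq_of_sum_apply_eq {ι α : Type*} [Fintype ι] [DecidableEq ι]
    [AddCommGroup α] {A B : Matrix ι ι α} (hoff : ∀ i j, i ≠ j → A i j = B i j)
    (hrow : ∀ i, ∑ j, A i j = ∑ j, B i j) : A = B := by
  ext i j
  obtain rfl | hij := eq_or_ne i j
  · have h := hrow i
    rw [← Finset.add_sum_erase _ _ (Finset.mem_univ i),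
      ← Finset.add_sum_erase _ _ (Finset.mem_univ i),
      Finset.sum_congr rfl fun j hj => hoff i j (Finset.ne_of_mem_erase hj).symm] at h
    exact add_right_cancel h
  · exact hoff i j hij

lemma AT_apply_of_ne {n : ℕ} (T : Finset (Fin n)) {i j : Fin n} (hij : i ≠ j) :
    AT n T i j = if i ∈ T ∧ j ∈ T then -1 else 0 := by
  simp [AT, hij]

lemma sum_AT_apply {n : ℕ} (T : Finset (Fin n)) (i : Fin n) : ∑ j, AT n T i j = 0 := by
  by_cases hi : i ∈ T
  · have h : ∀ j, AT n T i j =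
        (if i = j then (T.card : ℚ) else 0) - if j ∈ T then 1 else 0 := by
      intro j
      obtain rfl | hij := eq_or_ne i j
      · simp [AT, hi]
      · by_cases hj : j ∈ T <;> simp [AT, hi, hj, hij]
    simp only [h, Finset.sum_sub_distrib, Finset.sum_ite_eq, Finset.mem_univ, if_true,
      Finset.sum_boole, Finset.filter_mem_eq_inter, Finset.univ_inter, sub_self]
  · simp [AT, hi]

lemma eq_smul_one_add_sum_smul_AT {n : ℕ} {A : Matrix (Fin n) (Fin n) ℚ} {c : ℚ}
    (R : Finset (Finset (Fin n))) (γ : Finset (Fin n) → ℚ) (hrow : ∀ i, ∑ j, A i j = c)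
    (hoff : ∀ i j, i ≠ j → ∑ T ∈ R with i ∈ T ∧ j ∈ T, γ T = -A i j) :
    A = c • (1 : Matrix (Fin n) (Fin n) ℚ) + ∑ T ∈ R, γ T • AT n T := by
  refine Matrix.eq_of_offDiag_apply_eq_of_sum_apply_eq (fun i j hij => ?_) fun i => ?_
  · simp only [Matrix.add_apply, Matrix.smul_apply, one_apply_ne hij, smul_eq_mul, mul_zero,
      Matrix.sum_apply, AT_apply_of_ne _ hij, mul_ite, mul_neg, mul_one, Finset.sum_ite,
      Finset.sum_neg_distrib, Finset.sum_const_zero, add_zero, zero_add]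
    rw [hoff i j hij, neg_neg]
  · simp only [Matrix.add_apply, Matrix.smul_apply, Matrix.sum_apply, smul_eq_mul,
      Finset.sum_add_distrib]
    rw [Finset.sum_comm]
    simp [← Finset.mul_sum, sum_AT_apply, hrow, Matrix.one_apply]

/-- Every symmetric exceptional rational magic matrix `A` with sum `c` decomposes as
`A = c·I + ∑_{T ∈ R} γ(T)·A(T)` for some tree `(R, γ)`, with
`γ(T₀) = inf{-A i j : i ≠ j}`. -/
theorem stmt12 (n : ℕ) (hn : 2 ≤ n) (A : Matrix (Fin n) (Fin n) ℚ) (c : ℚ)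
    (hsym : Aᵀ = A) (hmagic : IsMagic A c)
    (hexc : ∀ i j k : Fin n, i ≠ j → j ≠ k → k ≠ i →
      ((A i j = A j k ∧ A k i ≤ A i j) ∨ (A j k = A k i ∧ A i j ≤ A j k) ∨
        (A i j = A k i ∧ A j k ≤ A i j))) :
    ∃ (R : Finset (Finset (Fin n))) (γ : Finset (Fin n) → ℚ),
      Finset.univ ∈ R ∧
      (∀ T ∈ R, 2 ≤ T.card) ∧
      (∀ T1 ∈ R, ∀ T2 ∈ R, Disjoint T1 T2 ∨ T1 ⊆ T2 ∨ T2 ⊆ T1) ∧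
      (∀ T ∈ R, T ≠ Finset.univ → 0 < γ T) ∧
      (∀ i j : Fin n, i ≠ j → γ Finset.univ ≤ -A i j) ∧
      (∃ i j : Fin n, i ≠ j ∧ γ Finset.univ = -A i j) ∧
      A = c • (1 : Matrix (Fin n) (Fin n) ℚ) + ∑ T ∈ R, γ T • AT n T := by
  open UltrametricMatrix in
  have : Nontrivial (Fin n) := Fin.nontrivial_iff_two_le.mpr hn
  have hult := offDiagUltrametric_of_exceptional A hsym hexc
  refine ⟨clusters A, weight A, univ_mem_clusters, fun T => two_le_card_of_mem_clusters,
    fun S hS T hT => clusters_laminar hsym hult hS hT, fun T => weight_pos, ?_, ?_,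
    eq_smul_one_add_sum_smul_AT _ _ hmagic.1 fun i j => sum_weight_of_ne hsym hult⟩
  · intro i j hij
    rw [weight_univ hsym hult, neg_le_neg_iff]
    exact Finset.le_max' _ _ (apply_mem_offDiagValues hij)
  · obtain ⟨i, j, hij, hM⟩ :=
      mem_offDiagValues.mp (Finset.max'_mem (offDiagValues A) (offDiagValues_nonempty A))
    exact ⟨i, j, hij, by rw [weight_univ hsym hult, hM]⟩
end

section
/- For the generalized magic matrices A_μ(T): if T_1 ∩ T_2 = ∅ then A_μ(T_1)A_μ(T_2) = A_μ(T_2)A_μ(T_1) = 0, and if T_1 ⊆ T_2 then A_μ(T_1)A_μ(T_2) = A_μ(T_2)A_μ(T_1) = σ_μ(T_2)·A_μ(T_1), where σ_μ(T) = Σ_{i∈T} μ_i. -/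
open BigOperators Matrix

/-!
On the coordinates in `T`, `A_μ(T) = σ_μ(T) · I - μ 𝟙ᵀ`. Hence `A_μ(T)` kills `μ`, has zero
column sums, and acts as multiplication by `σ_μ(T)` both on column vectors supported in `T`
with zero sum and on row vectors supported in `T` orthogonal to `μ`. The columns of
`A_μ(T₁)` are of the first kind and its rows of the second, so for `T₁ ⊆ T₂` multiplying
`A_μ(T₁)` by `A_μ(T₂)` on either side scales it by `σ_μ(T₂)`; for disjoint sets the supports
do not meet and the product vanishes.
-/

/-- The generalized elementary magic matrix `A_μ(T)`: entries `-μ i` for `i ≠ j` in `T`,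
`∑_{k ∈ T, k ≠ i} μ k` on the diagonal for `i ∈ T`, and `0` elsewhere. -/
def ATmu (n : ℕ) (μ : Fin n → ℕ) (T : Finset (Fin n)) : Matrix (Fin n) (Fin n) ℚ :=
  fun i j => if i ∈ T ∧ j ∈ T then
      (if i = j then ∑ k ∈ T.erase i, (μ k : ℚ) else -(μ i : ℚ)) else 0

section

variable {n : ℕ} (μ : Fin n → ℕ) {T T₁ T₂ : Finset (Fin n)}

lemma ATmu_apply_of_mem {i j : Fin n} (hi : i ∈ T) (hj : j ∈ T) :
    ATmu n μ T i j = (if i = j then ∑ k ∈ T, (μ k : ℚ) else 0) - μ i := by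
  simp only [ATmu, hi, hj, and_self, if_true]
  split_ifs with h
  · subst h
    rw [Finset.sum_erase_eq_sub hi]
  · ring

lemma ATmu_apply_of_notMem_left {i : Fin n} (j : Fin n) (hi : i ∉ T) : ATmu n μ T i j = 0 := by
  simp [ATmu, hi]

lemma ATmu_apply_of_notMem_right (i : Fin n) {j : Fin n} (hj : j ∉ T) : ATmu n μ T i j = 0 := by
  simp [ATmu, hj]

lemma ATmu_mulVec_apply_of_notMem (v : Fin n → ℚ) {i : Fin n} (hi : i ∉ T) :
    (ATmu n μ T *ᵥ v) i = 0 := by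
  simp [mulVec, dotProduct, ATmu_apply_of_notMem_left μ _ hi]

lemma vecMul_ATmu_apply_of_notMem (w : Fin n → ℚ) {j : Fin n} (hj : j ∉ T) :
    (w ᵥ* ATmu n μ T) j = 0 := by
  simp [vecMul, dotProduct, ATmu_apply_of_notMem_right μ _ hj]

lemma ATmu_mulVec_apply_of_mem (v : Fin n → ℚ) {i : Fin n} (hi : i ∈ T) :
    (ATmu n μ T *ᵥ v) i = (∑ k ∈ T, (μ k : ℚ)) * v i - μ i * ∑ k ∈ T, v k := by
  have hT : (ATmu n μ T *ᵥ v) i = ∑ k ∈ T, ATmu n μ T i k * v k :=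
    (Finset.sum_subset T.subset_univ fun k _ hk =>
      mul_eq_zero_of_left (ATmu_apply_of_notMem_right μ i hk) _).symm
  rw [hT, Finset.sum_congr rfl fun k hk => by rw [ATmu_apply_of_mem μ hi hk]]
  simp only [sub_mul, Finset.sum_sub_distrib, ite_mul, zero_mul, Finset.sum_ite_eq, hi,
    if_true, Finset.mul_sum]

lemma vecMul_ATmu_apply_of_mem (w : Fin n → ℚ) {j : Fin n} (hj : j ∈ T) :
    (w ᵥ* ATmu n μ T) j = (∑ k ∈ T, (μ k : ℚ)) * w j - ∑ k ∈ T, w k * μ k := by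
  have hT : (w ᵥ* ATmu n μ T) j = ∑ k ∈ T, w k * ATmu n μ T k j :=
    (Finset.sum_subset T.subset_univ fun k _ hk =>
      mul_eq_zero_of_right _ (ATmu_apply_of_notMem_left μ j hk)).symm
  rw [hT, Finset.sum_congr rfl fun k hk => by rw [ATmu_apply_of_mem μ hk hj]]
  simp only [mul_sub, Finset.sum_sub_distrib, mul_ite, mul_zero, Finset.sum_ite_eq', hj,
    if_true, mul_comm (w j)]

lemma ATmu_mulVec_natCast : ATmu n μ T *ᵥ (fun k => (μ k : ℚ)) = 0 := by
  ext i
  by_cases hi : i ∈ T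
  · rw [ATmu_mulVec_apply_of_mem μ _ hi, Pi.zero_apply]
    ring
  · exact ATmu_mulVec_apply_of_notMem μ _ hi

lemma one_vecMul_ATmu : 1 ᵥ* ATmu n μ T = 0 := by
  ext j
  by_cases hj : j ∈ T
  · simp [vecMul_ATmu_apply_of_mem μ _ hj]
  · exact vecMul_ATmu_apply_of_notMem μ _ hj

lemma ATmu_mulVec_eq_zero {v : Fin n → ℚ} (hv : ∀ k ∈ T, v k = 0) :
    ATmu n μ T *ᵥ v = 0 := by
  ext i
  by_cases hi : i ∈ T
  · simp [ATmu_mulVec_apply_of_mem μ _ hi, hv i hi, Finset.sum_eq_zero hv]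
  · exact ATmu_mulVec_apply_of_notMem μ _ hi

lemma ATmu_mulVec_eq_smul {v : Fin n → ℚ} (hv : ∀ k ∉ T, v k = 0) (hsum : ∑ k, v k = 0) :
    ATmu n μ T *ᵥ v = (∑ k ∈ T, (μ k : ℚ)) • v := by
  have hsumT : ∑ k ∈ T, v k = 0 := by
    rwa [Finset.sum_subset T.subset_univ fun k _ hk => hv k hk]
  ext i
  by_cases hi : i ∈ T
  · simp [ATmu_mulVec_apply_of_mem μ _ hi, hsumT]
  · simp [ATmu_mulVec_apply_of_notMem μ _ hi, hv i hi]

lemma vecMul_ATmu_eq_smul {w : Fin n → ℚ} (hw : ∀ k ∉ T, w k = 0)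
    (horth : ∑ k, w k * μ k = 0) :
    w ᵥ* ATmu n μ T = (∑ k ∈ T, (μ k : ℚ)) • w := by
  have horthT : ∑ k ∈ T, w k * μ k = 0 := by
    rwa [Finset.sum_subset T.subset_univ fun k _ hk => by rw [hw k hk, zero_mul]]
  ext j
  by_cases hj : j ∈ T
  · simp [vecMul_ATmu_apply_of_mem μ _ hj, horthT]
  · simp [vecMul_ATmu_apply_of_notMem μ _ hj, hw j hj]

lemma ATmu_mul_ATmu_of_disjoint (h : Disjoint T₁ T₂) : ATmu n μ T₁ * ATmu n μ T₂ = 0 := by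
  ext i j
  exact congrFun (ATmu_mulVec_eq_zero μ fun k hk =>
    ATmu_apply_of_notMem_left μ j (Finset.disjoint_left.mp h hk)) i

lemma ATmu_mul_ATmu_of_subset (h : T₁ ⊆ T₂) :
    ATmu n μ T₁ * ATmu n μ T₂ = (∑ k ∈ T₂, (μ k : ℚ)) • ATmu n μ T₁ := by
  ext i j
  exact congrFun (vecMul_ATmu_eq_smul μ (fun k hk => ATmu_apply_of_notMem_right μ i (hk <| h ·))
    (congrFun (ATmu_mulVec_natCast μ) i)) j

lemma ATmu_mul_ATmu_of_superset (h : T₁ ⊆ T₂) :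
    ATmu n μ T₂ * ATmu n μ T₁ = (∑ k ∈ T₂, (μ k : ℚ)) • ATmu n μ T₁ := by
  ext i j
  exact congrFun (ATmu_mulVec_eq_smul μ (fun k hk => ATmu_apply_of_notMem_left μ j (hk <| h ·))
    (by simpa [vecMul, dotProduct] using congrFun (one_vecMul_ATmu μ (T := T₁)) j)) i

end

theorem stmt13_general (n : ℕ) (μ : Fin n → ℕ) (T1 T2 : Finset (Fin n)) :
    (Disjoint T1 T2 → ATmu n μ T1 * ATmu n μ T2 = 0 ∧ ATmu n μ T2 * ATmu n μ T1 = 0) ∧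
    (T1 ⊆ T2 →
      ATmu n μ T1 * ATmu n μ T2 = (∑ i ∈ T2, (μ i : ℚ)) • ATmu n μ T1 ∧
      ATmu n μ T2 * ATmu n μ T1 = (∑ i ∈ T2, (μ i : ℚ)) • ATmu n μ T1) :=
  ⟨fun h => ⟨ATmu_mul_ATmu_of_disjoint μ h, ATmu_mul_ATmu_of_disjoint μ h.symm⟩,
    fun h => ⟨ATmu_mul_ATmu_of_subset μ h, ATmu_mul_ATmu_of_superset μ h⟩⟩

/-- Products of generalized elementary magic matrices: they annihilate each other when
the subsets are disjoint, and
`A_μ(T1)·A_μ(T2) = A_μ(T2)·A_μ(T1) = σ_μ(T2)·A_μ(T1)` when `T1 ⊆ T2`,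
where `σ_μ(T) = ∑_{i ∈ T} μ i`. -/
theorem stmt13 (n : ℕ) (μ : Fin n → ℕ) (hμ : ∀ i, 0 < μ i)
    (T1 T2 : Finset (Fin n)) (h1 : 2 ≤ T1.card) (h2 : 2 ≤ T2.card) :
    (Disjoint T1 T2 → ATmu n μ T1 * ATmu n μ T2 = 0 ∧ ATmu n μ T2 * ATmu n μ T1 = 0) ∧
    (T1 ⊆ T2 →
      ATmu n μ T1 * ATmu n μ T2 = (∑ i ∈ T2, (μ i : ℚ)) • ATmu n μ T1 ∧
      ATmu n μ T2 * ATmu n μ T1 = (∑ i ∈ T2, (μ i : ℚ)) • ATmu n μ T1) :=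
  stmt13_general n μ T1 T2
end

section
/- Let f = Π(y−a_i) be a reduced polynomial of degree n ≥ 2 over K̄ and w = Σ w_i ε_i ∈ F̄ (so Σ w_i = 0). If (u = Σ u_i ε_i, v) ∈ Ē × Ē solves u f'_x + v f'_y = w f, then v = Σ u_i a'_i ε_i and w_i = (Σ_{j≠i} (a'_i−a'_j)/(a_i−a_j)) u_i − Σ_{j≠i} ((a'_i−a'_j)/(a_i−a_j)) u_j for each i; equivalently, the column vector of the w_i equals the complete magic matrix 𝒜 applied to the column vector of the u_i. -/
open BigOperators Polynomial

/-- `ε_i = ∏_{j ≠ i} (y - a j)`, the (unnormalized) Lagrange interpolation basis. -/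
noncomputable def eps {K : Type*} [Field K] {n : ℕ} (a : Fin n → K) (i : Fin n) :
    Polynomial K :=
  ∏ j ∈ Finset.univ.erase i, (X - C (a j))

/-- The derivative `f'_x` of a polynomial in `y`, obtained by applying the derivation
`d` of the coefficient field coefficientwise. -/
noncomputable def Dx {K : Type*} [Field K] (d : K → K) (p : Polynomial K) :
    Polynomial K :=
  p.sum fun k c => C (d c) * X ^ k

/-!
Write `ε_i = nodal (univ.erase i) a` and `f = nodal univ a`; the derivation `∂/∂x` of `K`
acts on `K[y]` coefficientwise (`Differential.mapCoeffs`), so by the Leibniz rule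
`f'_x = -∑ a'_k ε_k`, while `f'_y = ∑ ε_k`. Evaluating the equation at the root `a i` of `f`
kills `w f` and every `ε_j` with `j ≠ i`, leaving `(v_i - u_i a'_i) ε_i(a_i)^2 = 0`.
With `v` known, the left side is `∑_{p ≠ k} u_p (a'_p - a'_k) ε_p ε_k`, and
`ε_p ε_k = f ε_{pk}` where `ε_{pk} = ∏_{j ≠ p, k} (y - a_j)`. Cancelling `f` gives
`w = ∑_{p ≠ k} u_p (a'_p - a'_k) ε_{pk}`, and its value at `a i` follows from
`(a_i - a_k) ε_{ik}(a_i) = ε_i(a_i)`.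
-/

open Finset Lagrange Differential

def Derivation.ofLeibniz {A : Type*} [CommRing A] (d : A → A)
    (hd_add : ∀ x y, d (x + y) = d x + d y) (hd_mul : ∀ x y, d (x * y) = d x * y + x * d y) :
    Derivation ℤ A A :=
  Derivation.mk' (AddMonoidHom.mk' d hd_add).toIntLinearMap fun x y => by
    simp only [AddMonoidHom.coe_toIntLinearMap, AddMonoidHom.mk'_apply, hd_mul, smul_eq_mul]
    ring

theorem Derivation.leibniz_finsetProd {R A M ι : Type*} [CommSemiring R] [CommSemiring A]
    [Algebra R A] [AddCommMonoid M] [Module A M] [Module R M] [DecidableEq ι]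
    (D : Derivation R A M) (s : Finset ι) (f : ι → A) :
    D (∏ i ∈ s, f i) = ∑ i ∈ s, (∏ j ∈ s.erase i, f j) • D (f i) := by
  induction s using Finset.induction_on with
  | empty => simp
  | insert i s hi ih =>
    rw [prod_insert hi, D.leibniz, ih, sum_insert hi, erase_insert hi, smul_sum, add_comm]
    congr 1
    refine sum_congr rfl fun k hk => ?_
    rw [erase_insert_of_ne (ne_of_mem_of_not_mem hk hi).symm,
      prod_insert fun h => hi (mem_of_mem_erase h), mul_smul]

theorem Dx_eq_mapCoeffs {K : Type*} [Field K] [Differential K] (p : K[X]) :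
    Dx (⇑Differential.deriv) p = mapCoeffs p := by
  ext k
  rw [coeff_mapCoeffs, Dx, Polynomial.sum_def, finsetSum_coeff]
  simp_rw [coeff_C_mul_X_pow]
  rw [sum_ite_eq]
  split_ifs with h
  · rfl
  · rw [notMem_support_iff.1 h, map_zero]

namespace Lagrange

variable {K ι : Type*} [Field K] [DecidableEq ι] {s : Finset ι} {v : ι → K}

theorem nodal_erase_mul_nodal_erase {i k : ι} (hk : k ∈ s) (hki : k ≠ i) :
    nodal (s.erase i) v * nodal (s.erase k) v = nodal s v * nodal ((s.erase i).erase k) v := by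
  rw [nodal_eq_mul_nodal_erase (mem_erase.2 ⟨hki, hk⟩), nodal_eq_mul_nodal_erase hk (s := s)]
  ring

theorem sub_mul_eval_nodal_erase_erase {i k : ι} (hk : k ∈ s) (hki : k ≠ i) :
    (v i - v k) * eval (v i) (nodal ((s.erase i).erase k) v)
      = eval (v i) (nodal (s.erase i) v) := by
  rw [nodal_eq_mul_nodal_erase (s := s.erase i) (mem_erase.2 ⟨hki, hk⟩), eval_mul]
  simp

theorem eval_sum_C_mul_nodal_erase (c : ι → K) {i : ι} (hi : i ∈ s) :
    eval (v i) (∑ p ∈ s, C (c p) * nodal (s.erase p) v)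
      = c i * eval (v i) (nodal (s.erase i) v) := by
  rw [eval_finsetSum, sum_eq_single_of_mem i hi]
  · simp
  · intro p hp hpi
    rw [eval_mul, eval_nodal_at_node (mem_erase.2 ⟨Ne.symm hpi, hi⟩), mul_zero]

theorem eval_sum_sum_C_mul_nodal_erase_erase (c : ι → ι → K) {i : ι} (hi : i ∈ s) :
    eval (v i) (∑ p ∈ s, ∑ k ∈ s.erase p, C (c p k) * nodal ((s.erase p).erase k) v)
      = ∑ k ∈ s.erase i, (c i k + c k i) * eval (v i) (nodal ((s.erase i).erase k) v) := by
  have hother : ∀ p ∈ s.erase i,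
      eval (v i) (∑ k ∈ s.erase p, C (c p k) * nodal ((s.erase p).erase k) v)
        = c p i * eval (v i) (nodal ((s.erase i).erase p) v) := by
    intro p hp
    have hip : i ≠ p := Ne.symm (ne_of_mem_erase hp)
    rw [eval_finsetSum, sum_eq_single_of_mem i (mem_erase.2 ⟨hip, hi⟩), eval_mul, eval_C,
      erase_right_comm]
    intro k _ hki
    rw [eval_mul, eval_nodal_at_node (mem_erase.2 ⟨Ne.symm hki, mem_erase.2 ⟨hip, hi⟩⟩),
      mul_zero]
  rw [eval_finsetSum, ← add_sum_erase _ _ hi, sum_congr rfl hother, eval_finsetSum,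
    ← sum_add_distrib]
  simp only [eval_mul, eval_C, add_mul]

variable [Differential K]

theorem mapCoeffs_nodal :
    mapCoeffs (nodal s v) = -∑ i ∈ s, C (v i)′ * nodal (s.erase i) v := by
  rw [nodal, Derivation.leibniz_finsetProd, ← sum_neg_distrib]
  refine sum_congr rfl fun i _ => ?_
  simp [nodal, mul_comm]

theorem eval_mapCoeffs_nodal_at_node {i : ι} (hi : i ∈ s) :
    eval (v i) (mapCoeffs (nodal s v)) = -(v i)′ * eval (v i) (nodal (s.erase i) v) := by
  rw [mapCoeffs_nodal, eval_neg, eval_sum_C_mul_nodal_erase _ hi, neg_mul]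

theorem sum_mul_mapCoeffs_nodal_add_sum_mul_derivative_nodal (u : ι → K) :
    (∑ p ∈ s, C (u p) * nodal (s.erase p) v) * mapCoeffs (nodal s v)
      + (∑ p ∈ s, C (u p * (v p)′) * nodal (s.erase p) v) * derivative (nodal s v)
    = nodal s v * ∑ p ∈ s, ∑ k ∈ s.erase p,
        C (u p * ((v p)′ - (v k)′)) * nodal ((s.erase p).erase k) v := by
  calc _ = ∑ p ∈ s, ∑ k ∈ s,
        C (u p * ((v p)′ - (v k)′)) * (nodal (s.erase p) v * nodal (s.erase k) v) := by
        rw [mapCoeffs_nodal, derivative_nodal, mul_neg, sum_mul_sum, sum_mul_sum,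
          ← sum_neg_distrib, ← sum_add_distrib]
        refine sum_congr rfl fun p _ => ?_
        rw [← sum_neg_distrib, ← sum_add_distrib]
        refine sum_congr rfl fun k _ => ?_
        simp only [map_mul, map_sub]
        ring
    _ = ∑ p ∈ s, ∑ k ∈ s.erase p,
        C (u p * ((v p)′ - (v k)′)) * (nodal (s.erase p) v * nodal (s.erase k) v) :=
        sum_congr rfl fun p _ => (sum_erase _ (by simp)).symm
    _ = _ := by
        rw [mul_sum]
        refine sum_congr rfl fun p _ => ?_
        rw [mul_sum]
        refine sum_congr rfl fun k hk => ?_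
        rw [nodal_erase_mul_nodal_erase (mem_of_mem_erase hk) (ne_of_mem_erase hk)]
        ring

end Lagrange

section
variable {K ι : Type*} [Field K] [Fintype ι] [DecidableEq ι] {a : ι → K}

theorem eval_nodal_univ_erase_ne_zero (ha : Function.Injective a) (i : ι) :
    eval (a i) (nodal (univ.erase i) a) ≠ 0 :=
  eval_nodal_not_at_node fun _ hj => ha.ne (ne_of_mem_erase hj).symm

variable [Differential K] {uc vc wc : ι → K}

theorem coeff_v_eq_of_solution (ha : Function.Injective a)
    (hsol : (∑ p, C (uc p) * nodal (univ.erase p) a) * mapCoeffs (nodal univ a)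
        + (∑ p, C (vc p) * nodal (univ.erase p) a) * derivative (nodal univ a)
        = (∑ p, C (wc p) * nodal (univ.erase p) a) * nodal univ a) (i : ι) :
    vc i = uc i * (a i)′ := by
  have h := congrArg (eval (a i)) hsol
  simp only [eval_add, eval_mul, eval_sum_C_mul_nodal_erase _ (mem_univ i),
    eval_mapCoeffs_nodal_at_node (mem_univ i), eval_nodal_derivative_eval_node_eq (mem_univ i),
    eval_nodal_at_node (mem_univ i)] at h
  have hE := eval_nodal_univ_erase_ne_zero ha i
  exact mul_right_cancel₀ (mul_ne_zero hE hE) (by linear_combination h)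

theorem coeff_w_eq_of_solution (ha : Function.Injective a)
    (hsol : (∑ p, C (uc p) * nodal (univ.erase p) a) * mapCoeffs (nodal univ a)
        + (∑ p, C (uc p * (a p)′) * nodal (univ.erase p) a) * derivative (nodal univ a)
        = (∑ p, C (wc p) * nodal (univ.erase p) a) * nodal univ a) (i : ι) :
    wc i = (∑ j ∈ univ.erase i, ((a i)′ - (a j)′) / (a i - a j)) * uc i
        - ∑ j ∈ univ.erase i, ((a i)′ - (a j)′) / (a i - a j) * uc j := by
  rw [sum_mul_mapCoeffs_nodal_add_sum_mul_derivative_nodal] at hsol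
  have hw := congrArg (eval (a i))
    (mul_left_cancel₀ nodal_ne_zero (hsol.trans (mul_comm _ _))).symm
  rw [eval_sum_C_mul_nodal_erase _ (mem_univ i),
    eval_sum_sum_C_mul_nodal_erase_erase _ (mem_univ i)] at hw
  apply mul_right_cancel₀ (eval_nodal_univ_erase_ne_zero ha i)
  rw [hw, sub_mul, sum_mul, sum_mul, sum_mul, ← sum_sub_distrib]
  refine sum_congr rfl fun k hk => ?_
  have hki := ne_of_mem_erase hk
  rw [← sub_mul_eval_nodal_erase_erase (mem_univ k) hki]
  have : a i - a k ≠ 0 := sub_ne_zero.2 (ha.ne hki.symm)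
  field_simp
  ring

end

theorem stmt15_general (K : Type*) [Field K] (d : K → K)
    (hd_add : ∀ x y, d (x + y) = d x + d y)
    (hd_mul : ∀ x y, d (x * y) = d x * y + x * d y)
    (n : ℕ) (a : Fin n → K) (ha : Function.Injective a)
    (wc uc vc : Fin n → K)
    (hsol : (∑ i, C (uc i) * eps a i) * Dx d (∏ i, (X - C (a i)))
        + (∑ i, C (vc i) * eps a i) * derivative (∏ i, (X - C (a i)))
        = (∑ i, C (wc i) * eps a i) * ∏ i, (X - C (a i))) :
    (∀ i, vc i = uc i * d (a i)) ∧
    (∀ i, wc i =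
      (∑ j ∈ Finset.univ.erase i, (d (a i) - d (a j)) / (a i - a j)) * uc i
        - ∑ j ∈ Finset.univ.erase i, ((d (a i) - d (a j)) / (a i - a j)) * uc j) := by
  let : Differential K := ⟨Derivation.ofLeibniz d hd_add hd_mul⟩
  have hDx : Dx d = ⇑(mapCoeffs : Derivation ℤ K[X] K[X]) := funext Dx_eq_mapCoeffs
  rw [hDx] at hsol
  have hv : ∀ i, vc i = uc i * d (a i) := coeff_v_eq_of_solution ha hsol
  obtain rfl : vc = fun i => uc i * d (a i) := funext hv
  exact ⟨hv, coeff_w_eq_of_solution ha hsol⟩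

/-- Let `f = ∏ (y - a i)` be reduced of degree `n ≥ 2` over a field `K` with a derivation
`d` (thought of as `∂/∂x`), and let `w = ∑ wc i · ε_i` with `∑ wc i = 0`.  If
`(u = ∑ uc i · ε_i, v = ∑ vc i · ε_i)` solves `u f'_x + v f'_y = w f`, then
`vc i = uc i · a'_i` and
`wc i = (∑_{j≠i} (a'_i - a'_j)/(a_i - a_j)) uc i - ∑_{j≠i} ((a'_i - a'_j)/(a_i - a_j)) uc j`,
i.e. the column vector of the `wc i` is the complete magic matrix applied to that of the
`uc i`. -/
theorem stmt15 (K : Type*) [Field K] (d : K → K)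
    (hd_add : ∀ x y, d (x + y) = d x + d y)
    (hd_mul : ∀ x y, d (x * y) = d x * y + x * d y)
    (n : ℕ) (hn : 2 ≤ n) (a : Fin n → K) (ha : Function.Injective a)
    (wc uc vc : Fin n → K) (hw0 : ∑ i, wc i = 0)
    (hsol : (∑ i, C (uc i) * eps a i) * Dx d (∏ i, (X - C (a i)))
        + (∑ i, C (vc i) * eps a i) * derivative (∏ i, (X - C (a i)))
        = (∑ i, C (wc i) * eps a i) * ∏ i, (X - C (a i))) :
    (∀ i, vc i = uc i * d (a i)) ∧
    (∀ i, wc i =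
      (∑ j ∈ Finset.univ.erase i, (d (a i) - d (a j)) / (a i - a j)) * uc i
        - ∑ j ∈ Finset.univ.erase i, ((d (a i) - d (a j)) / (a i - a j)) * uc j) :=
  stmt15_general K d hd_add hd_mul n a ha wc uc vc hsol
end
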